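/- arXiv:math/0209403 — 3 statements merged into one kernel-verified Lean document; each statement's English description precedes it below -/
import Mathlib

section
/- Fix λ₀, λ₁ ∈ X, integers b and a with a ≠ 0, and a positive integer k. Define g : X → ℂ by g(λ) = Σ_{μ ∈ Y∨/aY∨} Σ_{w,w' ∈ W} det(ww') · exp((πi b/(ak))|λ + kμ|² + (2πi/(ak))⟨λ + kμ, −w(λ₀) − a·w'(λ₁)⟩) (the summand depends only on μ modulo aY∨). Then: (1) g is invariant under the affine Weyl group W ⋉ kY∨, i.e. g(w(λ) + k y) = g(λ) for all w ∈ W, y ∈ Y∨ and λ ∈ X; and (2) g(λ) = 0 for every λ ∈ X such that ⟨λ, α⟩ ∈ kℤ for some positive root α. -/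
open scoped BigOperators Classical
open Complex

noncomputable section

/-- The ambient Euclidean space `𝔥ℝ*`. -/
abbrev EucV (l : ℕ) := EuclideanSpace ℝ (Fin l)

/-- Reflection in the hyperplane orthogonal to a vector `α`. -/
def rootReflection {l : ℕ} (α : EucV l) : EucV l ≃ₗᵢ[ℝ] EucV l :=
  Submodule.reflection ((ℝ ∙ α)ᗮ)

/-- An abstract reduced irreducible crystallographic root system with a chosen base,
in Euclidean space, normalized so that the long roots have squared length `2`.
This is the standing data extracted from a finite-dimensional complex simple
Lie algebra `𝔤` of rank `l`. -/
structure RootSystemData (l : ℕ) where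
  /-- the set of roots -/
  Δ : Finset (EucV l)
  /-- the chosen base (simple roots) `Π = {α₁, …, α_l}` -/
  base : Fin l → EucV l
  zero_not_mem : (0 : EucV l) ∉ Δ
  span_eq_top : Submodule.span ℝ (Δ : Set (EucV l)) = ⊤
  neg_mem : ∀ α ∈ Δ, -α ∈ Δ
  reflect_mem : ∀ α ∈ Δ, ∀ β ∈ Δ, rootReflection α β ∈ Δ
  crystallographic : ∀ α ∈ Δ, ∀ β ∈ Δ, ∃ n : ℤ,
    2 * (inner ℝ α β : ℝ) = (n : ℝ) * (inner ℝ α α : ℝ)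
  reduced : ∀ α ∈ Δ, ∀ t : ℝ, t • α ∈ Δ → t = 1 ∨ t = -1
  base_mem : ∀ i, base i ∈ Δ
  base_indep : LinearIndependent ℝ base
  base_pos_or_neg : ∀ α ∈ Δ,
    (∃ c : Fin l → ℕ, α = ∑ i, (c i : ℝ) • base i) ∨
    (∃ c : Fin l → ℕ, α = -(∑ i, (c i : ℝ) • base i))
  normalized : ∀ α ∈ Δ, (inner ℝ α α : ℝ) ≤ 2
  exists_long : ∃ α ∈ Δ, (inner ℝ α α : ℝ) = 2
  irreducible : ∀ s : Set (Fin l), s.Nonempty →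
    (∀ i ∈ s, ∀ j ∉ s, (inner ℝ (base i) (base j) : ℝ) = 0) → s = Set.univ

namespace RootSystemData

variable {l : ℕ} (D : RootSystemData l)

/-- The coroot `α∨ = 2α/⟨α,α⟩` of a (nonzero) vector. -/
def coroot (α : EucV l) : EucV l := (2 / (inner ℝ α α : ℝ)) • α

/-- The set `Δ₊` of positive roots relative to the base. -/
def Δplus : Finset (EucV l) :=
  D.Δ.filter fun α => ∃ c : Fin l → ℕ, α = ∑ i, (c i : ℝ) • D.base i

/-- `ρ`, the half sum of the positive roots. -/
def rho : EucV l := (2 : ℝ)⁻¹ • ∑ α ∈ D.Δplus, α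

/-- The Weyl group `W`, generated by the reflections in the roots. -/
def weyl : Subgroup (EucV l ≃ₗᵢ[ℝ] EucV l) :=
  Subgroup.closure { w | ∃ α ∈ D.Δ, w = rootReflection α }

/-- The coroot lattice `Y∨`, the `ℤ`-span of the coroots. -/
def corootLattice : Submodule ℤ (EucV l) :=
  Submodule.span ℤ (coroot '' (D.Δ : Set (EucV l)))

/-- The weight lattice `X`, the dual lattice of the coroot lattice. -/
def weightLattice : Set (EucV l) :=
  { x | ∀ y ∈ D.corootLattice, ∃ n : ℤ, (inner ℝ x y : ℝ) = n }

/-- `T` is a (finite) set of representatives for the quotient `Y∨ / n·Y∨`. -/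
def IsCorootReps (n : ℤ) (T : Finset (EucV l)) : Prop :=
  (∀ t ∈ T, t ∈ D.corootLattice) ∧
    ∀ y ∈ D.corootLattice, ∃! t, t ∈ T ∧ ∃ u ∈ D.corootLattice, y - t = n • u

/-- The closed `κ`-alcove `C_κ` relative to the base and the highest root `θ`. -/
def Ck (θ : EucV l) (κ : ℕ) : Set (EucV l) :=
  { x | (∀ i, (0 : ℝ) ≤ inner ℝ x (D.base i)) ∧ (inner ℝ x θ : ℝ) ≤ κ }

/-- The interior `int(C_κ)` of the `κ`-alcove. -/
def intCk (θ : EucV l) (κ : ℕ) : Set (EucV l) :=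
  { x | (∀ i, (0 : ℝ) < inner ℝ x (D.base i)) ∧ (inner ℝ x θ : ℝ) < κ }

/-- `θ` is the highest root of the root system. -/
def IsHighestRoot (θ : EucV l) : Prop :=
  θ ∈ D.Δ ∧ ∀ α ∈ D.Δ, ∃ c : Fin l → ℕ, θ - α = ∑ i, (c i : ℝ) • D.base i

/-- The dual Coxeter number `h∨ = 1 + ⟨ρ, θ⟩` (as a real number), `θ` the highest root. -/
def hv (θ : EucV l) : ℝ := 1 + (inner ℝ D.rho θ : ℝ)

end RootSystemData

/-- The determinant `det w` of an orthogonal transformation of Euclidean space. -/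
def wdet {l : ℕ} (w : EucV l ≃ₗᵢ[ℝ] EucV l) : ℝ :=
  LinearMap.det (w.toLinearEquiv : EucV l →ₗ[ℝ] EucV l)

/-- The covolume of the lattice spanned by the `ℤ`-basis `b`,
computed via the Gram determinant. -/
def latVol {l : ℕ} (b : Fin l → EucV l) : ℝ :=
  Real.sqrt (Matrix.det (Matrix.of fun i j => (inner ℝ (b i) (b j) : ℝ)))

-- ===================== AUXILIARY LEMMAS =====================
section Aux

variable {l : ℕ}

lemma rootReflection_apply' (α x : EucV l) :
    rootReflection α x = x - (2 * (inner ℝ x α : ℝ) / (inner ℝ α α : ℝ)) • α := by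
  rw [rootReflection, Submodule.reflection_apply, Submodule.starProjection_orthogonal_val,
    Submodule.starProjection_singleton]
  rw [real_inner_self_eq_norm_sq α]
  rw [real_inner_comm]
  simp only [RCLike.ofReal_real_eq_id, id]
  rw [two_smul]
  by_cases h : α = 0
  · simp [h]
  · have h2 : ‖α‖ ^ 2 ≠ 0 := pow_ne_zero 2 (norm_ne_zero_iff.mpr h)
    field_simp
    module

lemma wdet_mul (w w' : EucV l ≃ₗᵢ[ℝ] EucV l) : wdet (w * w') = wdet w * wdet w' := by
  unfold wdet
  rw [← LinearMap.det_comp]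
  rfl

lemma wdet_one : wdet (1 : EucV l ≃ₗᵢ[ℝ] EucV l) = 1 := by
  unfold wdet
  have : ((1 : EucV l ≃ₗᵢ[ℝ] EucV l).toLinearEquiv : EucV l →ₗ[ℝ] EucV l) = LinearMap.id := rfl
  rw [this, LinearMap.det_id]

lemma wdet_reflection (α : EucV l) (hα : α ≠ 0) : wdet (rootReflection α) = -1 := by
  unfold wdet rootReflection
  have h := Submodule.det_reflection ((ℝ ∙ α)ᗮ)
  rw [Submodule.orthogonal_orthogonal] at h
  rw [finrank_span_singleton hα] at h
  simpa using h

lemma rootReflection_inv (α : EucV l) : (rootReflection α)⁻¹ = rootReflection α := by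
  rw [LinearIsometryEquiv.inv_def, rootReflection, Submodule.reflection_symm]

lemma rootReflection_sq (α : EucV l) (x : EucV l) :
    rootReflection α (rootReflection α x) = x := by
  rw [rootReflection]; exact Submodule.reflection_involutive _ x

variable (D : RootSystemData l)

lemma root_ne_zero {α : EucV l} (hα : α ∈ D.Δ) : α ≠ 0 := by
  rintro rfl; exact D.zero_not_mem hα

lemma root_ip_pos {α : EucV l} (hα : α ∈ D.Δ) : (0:ℝ) < (inner ℝ α α : ℝ) := by
  rw [real_inner_self_eq_norm_sq]
  have := norm_pos_iff.mpr (root_ne_zero D hα)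
  positivity

lemma ip_sum_expand (x : EucV l) (c : Fin l → ℕ) :
    (inner ℝ x (∑ i, (c i : ℝ) • D.base i) : ℝ) = ∑ i, (c i : ℝ) * (inner ℝ x (D.base i) : ℝ) := by
  rw [inner_sum]
  exact Finset.sum_congr rfl fun i _ => real_inner_smul_right _ _ _

/-- every root has a long root not orthogonal to it -/
lemma not_all_orth : ∀ β ∈ D.Δ, ∃ θ ∈ D.Δ, (inner ℝ θ θ : ℝ) = 2 ∧ (inner ℝ β θ : ℝ) ≠ 0 := by
  -- the "A" condition: orthogonal to all long roots
  set A : EucV l → Prop := fun x => ∀ θ ∈ D.Δ, (inner ℝ θ θ : ℝ) = 2 → (inner ℝ x θ : ℝ) = 0 with hA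
  -- cross lemma : an A-root is orthogonal to every non-A root
  have cross : ∀ x, A x → ∀ γ ∈ D.Δ, ¬ A γ → (inner ℝ x γ : ℝ) = 0 := by
    intro x hx γ hγ hγA
    by_contra hxγ
    simp only [hA, not_forall] at hγA
    obtain ⟨δ, hδ, hδ2, hγδ⟩ := hγA
    have hσ : rootReflection γ δ ∈ D.Δ := D.reflect_mem γ hγ δ hδ
    have hσ2 : (inner ℝ (rootReflection γ δ) (rootReflection γ δ) : ℝ) = 2 := by
      rw [LinearIsometryEquiv.inner_map_map]; exact hδ2
    have hxσ := hx _ hσ hσ2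
    rw [rootReflection_apply', inner_sub_right, real_inner_smul_right] at hxσ
    have hxδ : (inner ℝ x δ : ℝ) = 0 := hx δ hδ hδ2
    rw [hxδ, zero_sub, neg_eq_zero, mul_eq_zero, div_eq_zero_iff] at hxσ
    have hγγ := (root_ip_pos D hγ).ne'
    have hδγ' : (inner ℝ δ γ : ℝ) ≠ 0 := by rwa [real_inner_comm]
    rcases hxσ with h | h
    · rcases h with h | h
      · exact hδγ' (by linarith [h])
      · exact hγγ h
    · exact hxγ h
  by_contra hcon
  push_neg at hcon
  obtain ⟨β, hβ, hall⟩ := hcon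
  have hAβ : A β := by
    intro θ hθ hθ2
    by_contra hne
    exact hne (hall θ hθ hθ2)
  -- the set of base indices connected to a long root
  set s : Set (Fin l) := { i | ¬ A (D.base i) } with hs
  have hsne : s.Nonempty := by
    obtain ⟨θ₀, hθ₀, hθ₀2⟩ := D.exists_long
    have : ∃ i, (inner ℝ θ₀ (D.base i) : ℝ) ≠ 0 := by
      by_contra hzero
      push_neg at hzero
      have : (inner ℝ θ₀ θ₀ : ℝ) = 0 := by
        rcases D.base_pos_or_neg θ₀ hθ₀ with ⟨c, hc⟩ | ⟨c, hc⟩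
        · rw [congrArg (fun y => (inner ℝ θ₀ y : ℝ)) hc, ip_sum_expand]
          simp [hzero]
        · rw [congrArg (fun y => (inner ℝ θ₀ y : ℝ)) hc, inner_neg_right, ip_sum_expand]
          simp [hzero]
      linarith [hθ₀2, this]
    obtain ⟨i, hi⟩ := this
    refine ⟨i, ?_⟩
    simp only [hs, Set.mem_setOf_eq, hA, not_forall]
    exact ⟨θ₀, hθ₀, hθ₀2, by rwa [real_inner_comm]⟩
  have hsuniv : s = Set.univ := by
    apply D.irreducible s hsne
    intro i hi j hj
    have hAj : A (D.base j) := not_not.mp (by simpa [hs] using hj)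
    have := cross _ hAj (D.base i) (D.base_mem i) (by simpa [hs] using hi)
    rwa [real_inner_comm]
  -- now β is orthogonal to all base vectors, hence to itself
  have hβ0 : ∀ i, (inner ℝ β (D.base i) : ℝ) = 0 := by
    intro i
    have hi : i ∈ s := hsuniv ▸ Set.mem_univ i
    exact cross β hAβ (D.base i) (D.base_mem i) (by simpa [hs] using hi)
  have : (inner ℝ β β : ℝ) = 0 := by
    rcases D.base_pos_or_neg β hβ with ⟨c, hc⟩ | ⟨c, hc⟩
    · rw [congrArg (fun y => (inner ℝ β y : ℝ)) hc, ip_sum_expand]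
      simp [hβ0]
    · rw [congrArg (fun y => (inner ℝ β y : ℝ)) hc, inner_neg_right, ip_sum_expand]
      simp [hβ0]
  exact (root_ip_pos D hβ).ne' this

end Aux
section Aux2

variable {l : ℕ} (D : RootSystemData l)

/-- the squared length of each root divides 2 (normalization + irreducibility). -/
lemma sq_len_div : ∀ β ∈ D.Δ, ∃ c : ℤ, 0 < c ∧ (inner ℝ β β : ℝ) * c = 2 := by
  intro β hβ
  obtain ⟨θ, hθ, hθ2, hβθ⟩ := not_all_orth D β hβ
  obtain ⟨n, hn⟩ := D.crystallographic θ hθ β hβ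
  obtain ⟨m, hm⟩ := D.crystallographic β hβ θ hθ
  rw [hθ2] at hn
  have hθβ : (inner ℝ θ β : ℝ) = n := by linarith
  have hβθ' : (inner ℝ β θ : ℝ) = n := by rw [real_inner_comm]; exact hθβ
  have hn0 : n ≠ 0 := by
    intro h; rw [h] at hβθ'; exact hβθ (by exact_mod_cast hβθ')
  have hA : (inner ℝ β β : ℝ) * m = 2 * n := by rw [hβθ'] at hm; linarith
  have hip := root_ip_pos D hβ
  have hle := D.normalized β hβ
  by_cases hpar : ∃ t : ℝ, β = t • θ
  · obtain ⟨t, ht⟩ := hpar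
    have ht1 : t = 1 ∨ t = -1 := D.reduced θ hθ t (by rw [← ht]; exact hβ)
    have hββ : (inner ℝ β β : ℝ) = 2 := by
      rw [ht, real_inner_smul_left, real_inner_smul_right, hθ2]
      rcases ht1 with h | h <;> rw [h] <;> ring
    exact ⟨1, one_pos, by rw [hββ]; norm_num⟩
  · push_neg at hpar
    have hθ0 : θ ≠ 0 := root_ne_zero D hθ
    have hnθ : ‖θ‖ ≠ 0 := norm_ne_zero_iff.mpr hθ0
    have h1 : (inner ℝ θ β : ℝ) < ‖θ‖ * ‖β‖ := by
      rw [inner_lt_norm_mul_iff_real]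
      intro hcon
      exact hpar (‖β‖ / ‖θ‖) (by
        rw [div_eq_mul_inv, mul_comm, mul_smul, hcon, smul_smul, inv_mul_cancel₀ hnθ, one_smul])
    have h2 : -(inner ℝ θ β : ℝ) < ‖θ‖ * ‖β‖ := by
      have := @inner_lt_norm_mul_iff_real (EucV l) _ _ θ (-β)
      rw [inner_neg_right, norm_neg] at this
      rw [this]
      intro hcon
      rw [smul_neg] at hcon
      exact hpar (-(‖β‖ / ‖θ‖)) (by
        rw [neg_smul, div_eq_mul_inv, mul_comm, mul_smul, hcon, smul_neg, neg_neg,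
          smul_smul, inv_mul_cancel₀ hnθ, one_smul])
    have hCS : (inner ℝ θ β : ℝ) ^ 2 < (‖θ‖ * ‖β‖) ^ 2 := by nlinarith [h1, h2]
    have hD : (n : ℝ) ^ 2 < 2 * (inner ℝ β β : ℝ) := by
      rw [hθβ] at hCS
      have : (‖θ‖ * ‖β‖) ^ 2 = (inner ℝ θ θ : ℝ) * (inner ℝ β β : ℝ) := by
        rw [real_inner_self_eq_norm_sq, real_inner_self_eq_norm_sq]; ring
      rw [this, hθ2] at hCS
      exact hCS
    have e1 : ((n * m : ℤ) : ℝ) * (inner ℝ β β : ℝ) = 2 * (n : ℝ) ^ 2 := by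
      push_cast
      nlinarith [hA]
    have e2 : ((n * m : ℤ) : ℝ) < 4 := by nlinarith [hip, hD, e1]
    have e3 : ((n : ℝ)) ^ 2 ≤ ((n * m : ℤ) : ℝ) := by nlinarith [hip, hle, e1]
    have i2 : (n * m : ℤ) < 4 := by exact_mod_cast e2
    have i3 : n ^ 2 ≤ n * m := by exact_mod_cast e3
    have h4 : n ^ 2 < 4 := lt_of_le_of_lt i3 i2
    have hb1 : n < 2 := by nlinarith
    have hb2 : -2 < n := by nlinarith
    have hn2 : n ^ 2 = 1 := by interval_cases n <;> simp_all
    refine ⟨n * m, ?_, ?_⟩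
    · have : (0:ℝ) < ((n * m : ℤ) : ℝ) := by
        have hn2' : ((n:ℝ)) ^ 2 = 1 := by exact_mod_cast congrArg (fun z : ℤ => (z : ℝ)) hn2
        nlinarith [hip, e1]
      exact_mod_cast this
    · have hn2' : ((n:ℝ)) ^ 2 = 1 := by exact_mod_cast congrArg (fun z : ℤ => (z : ℝ)) hn2
      rw [mul_comm] at e1
      rw [e1, hn2']; ring

end Aux2
section Aux3

variable {l : ℕ} (D : RootSystemData l)

lemma coroot_eq : ∀ β ∈ D.Δ, ∃ c : ℤ, 0 < c ∧ RootSystemData.coroot β = (c:ℝ) • β ∧ (inner ℝ β β : ℝ) * c = 2 := by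
  intro β hβ
  obtain ⟨c, hc, hc2⟩ := sq_len_div D β hβ
  refine ⟨c, hc, ?_, hc2⟩
  show (2 / (inner ℝ β β : ℝ)) • β = (c:ℝ) • β
  congr 1
  have h0 := (root_ip_pos D hβ).ne'
  rw [div_eq_iff h0]
  linarith [hc2]

lemma ip_coroot_root_int : ∀ α ∈ D.Δ, ∀ β ∈ D.Δ, ∃ n : ℤ, (inner ℝ (RootSystemData.coroot α) β : ℝ) = n := by
  intro α hα β hβ
  obtain ⟨c, hc, hce, hc2⟩ := coroot_eq D α hα
  obtain ⟨n, hn⟩ := D.crystallographic α hα β hβ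
  refine ⟨n, ?_⟩
  rw [hce, real_inner_smul_left]
  push_cast
  linear_combination (c:ℝ)/2 * hn + (n:ℝ)/2 * hc2

lemma ip_coroot_coroot_int : ∀ α ∈ D.Δ, ∀ β ∈ D.Δ,
    ∃ n : ℤ, (inner ℝ (RootSystemData.coroot α) (RootSystemData.coroot β) : ℝ) = n := by
  intro α hα β hβ
  obtain ⟨c, hc, hce, hc2⟩ := coroot_eq D β hβ
  obtain ⟨n, hn⟩ := ip_coroot_root_int D α hα β hβ
  refine ⟨c * n, ?_⟩
  rw [hce, real_inner_smul_right, hn]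
  push_cast; ring

lemma ip_coroot_self_even : ∀ α ∈ D.Δ, ∃ n : ℤ, (inner ℝ (RootSystemData.coroot α) (RootSystemData.coroot α) : ℝ) = 2 * n := by
  intro α hα
  obtain ⟨c, hc, hce, hc2⟩ := coroot_eq D α hα
  refine ⟨c, ?_⟩
  rw [hce, real_inner_smul_left, real_inner_smul_right]
  linear_combination (c:ℝ) * hc2

lemma lat_pair_coroot_int : ∀ v ∈ D.corootLattice, ∀ α ∈ D.Δ,
    ∃ n : ℤ, (inner ℝ (RootSystemData.coroot α) v : ℝ) = n := by
  intro v hv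
  induction hv using Submodule.span_induction with
  | mem x hx =>
    obtain ⟨β, hβ, rfl⟩ := hx
    intro α hα
    exact ip_coroot_coroot_int D α hα β hβ
  | zero => exact fun α hα => ⟨0, by simp⟩
  | add x y hx hy ihx ihy =>
    intro α hα
    obtain ⟨n, hn⟩ := ihx α hα
    obtain ⟨m, hm⟩ := ihy α hα
    exact ⟨n + m, by rw [inner_add_right, hn, hm]; push_cast; ring⟩
  | smul z x hx ihx =>
    intro α hα
    obtain ⟨n, hn⟩ := ihx α hα
    refine ⟨z * n, ?_⟩
    rw [(Int.cast_smul_eq_zsmul ℝ _ _).symm, real_inner_smul_right, hn]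
    push_cast; ring

lemma lat_pair_int : ∀ u ∈ D.corootLattice, ∀ v ∈ D.corootLattice,
    ∃ n : ℤ, (inner ℝ u v : ℝ) = n := by
  intro u hu
  induction hu using Submodule.span_induction with
  | mem x hx =>
    obtain ⟨β, hβ, rfl⟩ := hx
    exact fun v hv => lat_pair_coroot_int D v hv β hβ
  | zero => exact fun v hv => ⟨0, by simp⟩
  | add x y hx hy ihx ihy =>
    intro v hv
    obtain ⟨n, hn⟩ := ihx v hv
    obtain ⟨m, hm⟩ := ihy v hv
    exact ⟨n + m, by rw [inner_add_left, hn, hm]; push_cast; ring⟩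
  | smul z x hx ihx =>
    intro v hv
    obtain ⟨n, hn⟩ := ihx v hv
    refine ⟨z * n, ?_⟩
    rw [(Int.cast_smul_eq_zsmul ℝ _ _).symm, real_inner_smul_left, hn]
    push_cast; ring

lemma lat_self_even : ∀ u ∈ D.corootLattice, ∃ n : ℤ, (inner ℝ u u : ℝ) = 2 * n := by
  intro u hu
  induction hu using Submodule.span_induction with
  | mem x hx =>
    obtain ⟨β, hβ, rfl⟩ := hx
    exact ip_coroot_self_even D β hβ
  | zero => exact ⟨0, by simp⟩
  | add x y hx hy ihx ihy =>
    obtain ⟨n, hn⟩ := ihx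
    obtain ⟨m, hm⟩ := ihy
    obtain ⟨p, hp⟩ := lat_pair_int D x hx y hy
    refine ⟨n + m + p, ?_⟩
    have hyx : (inner ℝ y x : ℝ) = p := by rw [real_inner_comm]; exact hp
    rw [inner_add_left, inner_add_right, inner_add_right, hn, hm, hp, hyx]
    push_cast; ring
  | smul z x hx ihx =>
    obtain ⟨n, hn⟩ := ihx
    refine ⟨z * z * n, ?_⟩
    rw [(Int.cast_smul_eq_zsmul ℝ _ _).symm, real_inner_smul_left, real_inner_smul_right, hn]
    push_cast; ring

lemma weyl_maps_root : ∀ w ∈ D.weyl, (∀ α ∈ D.Δ, w α ∈ D.Δ) ∧ (∀ α ∈ D.Δ, w⁻¹ α ∈ D.Δ) := by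
  intro w hw
  induction hw using Subgroup.closure_induction with
  | mem x hx =>
    obtain ⟨α, hα, rfl⟩ := hx
    exact ⟨fun β hβ => D.reflect_mem α hα β hβ,
      by rw [rootReflection_inv]; exact fun β hβ => D.reflect_mem α hα β hβ⟩
  | one => exact ⟨fun β hβ => hβ, fun β hβ => by simpa using hβ⟩
  | mul x y hx hy ihx ihy =>
    refine ⟨fun β hβ => ?_, fun β hβ => ?_⟩
    · rw [LinearIsometryEquiv.coe_mul, Function.comp_apply]
      exact ihx.1 _ (ihy.1 _ hβ)
    · rw [mul_inv_rev, LinearIsometryEquiv.coe_mul, Function.comp_apply]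
      exact ihy.2 _ (ihx.2 _ hβ)
  | inv x hx ihx => exact ⟨ihx.2, by simpa using ihx.1⟩

lemma coroot_map (w : EucV l ≃ₗᵢ[ℝ] EucV l) (α : EucV l) :
    RootSystemData.coroot (w α) = w (RootSystemData.coroot α) := by
  show (2 / (inner ℝ (w α) (w α) : ℝ)) • (w α) = w ((2 / (inner ℝ α α : ℝ)) • α)
  rw [LinearIsometryEquiv.inner_map_map, LinearIsometryEquiv.map_smul]

lemma weyl_maps_lat : ∀ w ∈ D.weyl, ∀ u ∈ D.corootLattice, w u ∈ D.corootLattice := by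
  intro w hw u hu
  induction hu using Submodule.span_induction with
  | mem x hx =>
    obtain ⟨β, hβ, rfl⟩ := hx
    rw [← coroot_map w β]
    exact Submodule.subset_span ⟨w β, (weyl_maps_root D w hw).1 β hβ, rfl⟩
  | zero => simpa using Submodule.zero_mem _
  | add x y hx hy ihx ihy => rw [map_add]; exact Submodule.add_mem _ ihx ihy
  | smul z x hx ihx =>
    rw [(Int.cast_smul_eq_zsmul ℝ _ _).symm, LinearIsometryEquiv.map_smul, ← (Int.cast_smul_eq_zsmul ℝ _ _).symm]
    exact Submodule.smul_mem _ _ ihx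

lemma wdet_pm : ∀ w ∈ D.weyl, wdet w = 1 ∨ wdet w = -1 := by
  intro w hw
  induction hw using Subgroup.closure_induction with
  | mem x hx =>
    obtain ⟨α, hα, rfl⟩ := hx
    exact Or.inr (wdet_reflection α (root_ne_zero D hα))
  | one => exact Or.inl wdet_one
  | mul x y hx hy ihx ihy =>
    rw [wdet_mul]
    rcases ihx with h | h <;> rcases ihy with h' | h' <;> rw [h, h'] <;> norm_num
  | inv x hx ihx =>
    have h1 : wdet x * wdet x⁻¹ = 1 := by rw [← wdet_mul, mul_inv_cancel, wdet_one]
    rcases ihx with h | h <;> rw [h] at h1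
    · left; linarith
    · right; linarith

lemma wdet_sq : ∀ w ∈ D.weyl, wdet w * wdet w = 1 := by
  intro w hw
  rcases wdet_pm D w hw with h | h <;> rw [h] <;> norm_num

end Aux3
section Aux4

variable {l : ℕ}

lemma finsum_mem_neg {G : Type*} (s : Set G) (f : G → ℂ) :
    (∑ᶠ i ∈ s, (-f i)) = -∑ᶠ i ∈ s, f i := by
  rw [finsum_mem_def, finsum_mem_def, ← finsum_neg_distrib]
  congr 1
  ext i
  by_cases h : i ∈ s <;> simp [h]

lemma finsum_weyl_reindex (D : RootSystemData l) {w₀ : EucV l ≃ₗᵢ[ℝ] EucV l}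
    (hw₀ : w₀ ∈ D.weyl) (f : (EucV l ≃ₗᵢ[ℝ] EucV l) → ℂ) :
    (∑ᶠ w ∈ (D.weyl : Set (EucV l ≃ₗᵢ[ℝ] EucV l)), f (w₀ * w)) =
      ∑ᶠ w ∈ (D.weyl : Set (EucV l ≃ₗᵢ[ℝ] EucV l)), f w := by
  apply finsum_mem_eq_of_bijOn (fun w => w₀ * w)
  · refine ⟨fun x hx => ?_, fun x _ y _ h => ?_, fun x hx => ?_⟩
    · exact Subgroup.mul_mem _ hw₀ hx
    · exact mul_left_cancel h
    · exact ⟨w₀⁻¹ * x, Subgroup.mul_mem _ (Subgroup.inv_mem _ hw₀) hx, by group⟩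
  · intro x _; rfl

variable (D : RootSystemData l) (lam0 lam1 : EucV l) (b a : ℤ) (k : ℕ)

/-- the individual summand of `g`. -/
def sumd (ν : EucV l) (w w' : EucV l ≃ₗᵢ[ℝ] EucV l) : ℂ :=
  ((wdet w * wdet w' : ℝ) : ℂ) *
    Complex.exp
      ((Real.pi : ℂ) * Complex.I * (b : ℂ) / ((a : ℂ) * (k : ℂ)) *
          ((‖ν‖ ^ 2 : ℝ) : ℂ) +
        2 * (Real.pi : ℂ) * Complex.I / ((a : ℂ) * (k : ℂ)) *
          ((inner ℝ ν (-(w lam0) - (a : ℝ) • (w' lam1)) : ℝ) : ℂ))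

/-- the inner double sum of `g`. -/
def Sfun (ν : EucV l) : ℂ :=
  ∑ᶠ w ∈ (D.weyl : Set (EucV l ≃ₗᵢ[ℝ] EucV l)),
    ∑ᶠ w' ∈ (D.weyl : Set (EucV l ≃ₗᵢ[ℝ] EucV l)), sumd lam0 lam1 b a k ν w w'

end Aux4
section Aux5

variable {l : ℕ} (D : RootSystemData l) (lam0 lam1 : EucV l) (b a : ℤ) (k : ℕ)

lemma ip_coroot' (α x : EucV l) :
    (inner ℝ x (RootSystemData.coroot α) : ℝ) = 2 * (inner ℝ x α : ℝ) / (inner ℝ α α : ℝ) := by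
  show (inner ℝ x ((2 / (inner ℝ α α : ℝ)) • α) : ℝ) = _
  rw [real_inner_smul_right]
  ring

/-- `sumd` only depends on `ν` through its class mod `k·a·Y∨`. -/
lemma sumd_shift (hlam0 : lam0 ∈ D.weightLattice) (hlam1 : lam1 ∈ D.weightLattice)
    (ha : a ≠ 0) (hk : k ≠ 0)
    {w w' : EucV l ≃ₗᵢ[ℝ] EucV l} (hw : w ∈ D.weyl) (hw' : w' ∈ D.weyl)
    {ν : EucV l} (hν : ∀ u ∈ D.corootLattice, ∃ n : ℤ, (inner ℝ ν u : ℝ) = n)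
    {u : EucV l} (hu : u ∈ D.corootLattice) :
    sumd lam0 lam1 b a k (ν + ((k : ℝ) * (a : ℝ)) • u) w w' = sumd lam0 lam1 b a k ν w w' := by
  obtain ⟨n₁, hn₁⟩ := hν u hu
  obtain ⟨n₂, hn₂⟩ := lat_self_even D u hu
  have hwu : w⁻¹ u ∈ D.corootLattice := weyl_maps_lat D w⁻¹ (Subgroup.inv_mem _ hw) u hu
  have hw'u : w'⁻¹ u ∈ D.corootLattice := weyl_maps_lat D w'⁻¹ (Subgroup.inv_mem _ hw') u hu
  obtain ⟨n₃, hn₃⟩ := hlam0 (w⁻¹ u) hwu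
  obtain ⟨n₄, hn₄⟩ := hlam1 (w'⁻¹ u) hw'u
  have key : ∀ (v : EucV l ≃ₗᵢ[ℝ] EucV l) (x : EucV l),
      (inner ℝ u (v x) : ℝ) = (inner ℝ (v⁻¹ u) x : ℝ) := by
    intro v x
    conv_lhs => rw [show u = v (v⁻¹ u) by
      rw [LinearIsometryEquiv.inv_def, LinearIsometryEquiv.apply_symm_apply]]
    rw [LinearIsometryEquiv.inner_map_map]
  have hn₃' : (inner ℝ u (w lam0) : ℝ) = n₃ := by
    rw [key, real_inner_comm]; exact hn₃
  have hn₄' : (inner ℝ u (w' lam1) : ℝ) = n₄ := by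
    rw [key, real_inner_comm]; exact hn₄
  set c : ℝ := (k : ℝ) * (a : ℝ) with hc
  set X : EucV l := -(w lam0) - (a : ℝ) • (w' lam1) with hX
  have hnorm : (‖ν + c • u‖ ^ 2 : ℝ) = ‖ν‖ ^ 2 + 2 * (c * n₁) + c ^ 2 * (2 * n₂) := by
    rw [norm_add_sq_real, real_inner_smul_right, hn₁, norm_smul]
    rw [Real.norm_eq_abs, mul_pow, _root_.sq_abs,
      show (‖u‖ ^ 2 : ℝ) = (inner ℝ u u : ℝ) from (real_inner_self_eq_norm_sq u).symm, hn₂]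
  have hip : (inner ℝ (ν + c • u) X : ℝ) = (inner ℝ ν X : ℝ) + c * (-(n₃ : ℝ) - (a : ℝ) * n₄) := by
    rw [inner_add_left, real_inner_smul_left, hX, inner_sub_right, inner_sub_right,
      inner_neg_right, inner_neg_right, real_inner_smul_right, real_inner_smul_right,
      hn₃', hn₄']
  unfold sumd
  congr 1
  have hac : (a : ℂ) * (k : ℂ) ≠ 0 := by
    apply mul_ne_zero
    · exact_mod_cast ha
    · exact_mod_cast hk
  have harg :
      (Real.pi : ℂ) * Complex.I * (b : ℂ) / ((a : ℂ) * (k : ℂ)) *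
          ((‖ν + c • u‖ ^ 2 : ℝ) : ℂ) +
        2 * (Real.pi : ℂ) * Complex.I / ((a : ℂ) * (k : ℂ)) *
          ((inner ℝ (ν + c • u) X : ℝ) : ℂ) =
      ((Real.pi : ℂ) * Complex.I * (b : ℂ) / ((a : ℂ) * (k : ℂ)) *
          ((‖ν‖ ^ 2 : ℝ) : ℂ) +
        2 * (Real.pi : ℂ) * Complex.I / ((a : ℂ) * (k : ℂ)) *
          ((inner ℝ ν X : ℝ) : ℂ)) +
      ((b * n₁ + b * k * a * n₂ - n₃ - a * n₄ : ℤ) : ℂ) * (2 * (Real.pi : ℂ) * Complex.I) := by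
    rw [hnorm, hip]
    push_cast [hc]
    field_simp
    ring
  rw [harg, Complex.exp_add]
  have : ((b * n₁ + b * k * a * n₂ - n₃ - a * n₄ : ℤ) : ℂ) * (2 * (Real.pi : ℂ) * Complex.I) =
      ((b * n₁ + b * k * a * n₂ - n₃ - a * n₄ : ℤ) : ℂ) * (2 * (Real.pi : ℂ) * Complex.I) := rfl
  rw [Complex.exp_int_mul_two_pi_mul_I, mul_one]

/-- transport of `sumd` along an isometry. -/
lemma sumd_transport {w₀ : EucV l ≃ₗᵢ[ℝ] EucV l} (hw₀ : w₀ ∈ D.weyl)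
    (w w' : EucV l ≃ₗᵢ[ℝ] EucV l) (ν : EucV l) :
    sumd lam0 lam1 b a k (w₀ ν) (w₀ * w) (w₀ * w') = sumd lam0 lam1 b a k ν w w' := by
  unfold sumd
  have hdet : wdet (w₀ * w) * wdet (w₀ * w') = wdet w * wdet w' := by
    rw [wdet_mul, wdet_mul]
    have := wdet_sq D w₀ hw₀
    linear_combination (wdet w * wdet w') * this
  have hnorm : ‖w₀ ν‖ = ‖ν‖ := w₀.norm_map ν
  have hip : (inner ℝ (w₀ ν) (-((w₀ * w) lam0) - (a : ℝ) • ((w₀ * w') lam1)) : ℝ) =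
      (inner ℝ ν (-(w lam0) - (a : ℝ) • (w' lam1)) : ℝ) := by
    have : -((w₀ * w) lam0) - (a : ℝ) • ((w₀ * w') lam1) =
        w₀ (-(w lam0) - (a : ℝ) • (w' lam1)) := by
      rw [LinearIsometryEquiv.coe_mul, LinearIsometryEquiv.coe_mul, Function.comp_apply,
        Function.comp_apply, map_sub, map_neg, LinearIsometryEquiv.map_smul]
    rw [this, LinearIsometryEquiv.inner_map_map]
  rw [hdet, hnorm, hip]

/-- the sign flip which kills `g` on the walls. -/
lemma sumd_flip (hlam1 : lam1 ∈ D.weightLattice) (ha : a ≠ 0) (hk : k ≠ 0)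
    {α : EucV l} (hα : α ∈ D.Δ)
    {w' : EucV l ≃ₗᵢ[ℝ] EucV l} (hw' : w' ∈ D.weyl)
    (w : EucV l ≃ₗᵢ[ℝ] EucV l)
    {ν : EucV l} {K : ℤ} (hνα : (inner ℝ ν α : ℝ) = (k : ℝ) * (K : ℝ)) :
    sumd lam0 lam1 b a k ν w (rootReflection α * w') = - sumd lam0 lam1 b a k ν w w' := by
  have hα0 : α ≠ 0 := root_ne_zero D hα
  -- the integer p = ⟨w'λ₁, α∨⟩
  have hcor : RootSystemData.coroot (w'⁻¹ α) ∈ D.corootLattice := by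
    apply Submodule.subset_span
    exact ⟨w'⁻¹ α, (weyl_maps_root D w' hw').2 α hα, rfl⟩
  obtain ⟨p, hp⟩ := hlam1 _ hcor
  have hp' : (inner ℝ (w' lam1) (RootSystemData.coroot α) : ℝ) = p := by
    rw [← hp]
    rw [coroot_map w'⁻¹ α]
    rw [← LinearIsometryEquiv.inner_map_map w' lam1]
    rw [LinearIsometryEquiv.inv_def, LinearIsometryEquiv.apply_symm_apply]
  have hpα : 2 * (inner ℝ (w' lam1) α : ℝ) / (inner ℝ α α : ℝ) = p := by
    rw [← hp', ip_coroot']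
  -- reflection formula inside the inner product
  have hsw : (rootReflection α * w') lam1 =
      w' lam1 - (2 * (inner ℝ (w' lam1) α : ℝ) / (inner ℝ α α : ℝ)) • α := by
    rw [LinearIsometryEquiv.coe_mul, Function.comp_apply, rootReflection_apply']
  unfold sumd
  have hdet : ((wdet w * wdet (rootReflection α * w') : ℝ) : ℂ) =
      -((wdet w * wdet w' : ℝ) : ℂ) := by
    rw [wdet_mul, wdet_reflection α hα0]
    push_cast
    ring
  have hvec : -(w lam0) - (a : ℝ) • ((rootReflection α * w') lam1)
      = (-(w lam0) - (a : ℝ) • (w' lam1)) +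
        ((a : ℝ) * (2 * (inner ℝ (w' lam1) α : ℝ) / (inner ℝ α α : ℝ))) • α := by
    rw [hsw]
    module
  have hip : (inner ℝ ν (-(w lam0) - (a : ℝ) • ((rootReflection α * w') lam1)) : ℝ) =
      (inner ℝ ν (-(w lam0) - (a : ℝ) • (w' lam1)) : ℝ) + (a : ℝ) * ((p : ℝ) * ((k : ℝ) * K)) := by
    rw [hvec, inner_add_right, real_inner_smul_right]
    rw [hνα, hpα]
    ring
  have hac : (a : ℂ) * (k : ℂ) ≠ 0 := by
    apply mul_ne_zero
    · exact_mod_cast ha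
    · exact_mod_cast hk
  have harg :
      (Real.pi : ℂ) * Complex.I * (b : ℂ) / ((a : ℂ) * (k : ℂ)) * ((‖ν‖ ^ 2 : ℝ) : ℂ) +
        2 * (Real.pi : ℂ) * Complex.I / ((a : ℂ) * (k : ℂ)) *
          ((inner ℝ ν (-(w lam0) - (a : ℝ) • ((rootReflection α * w') lam1)) : ℝ) : ℂ) =
      ((Real.pi : ℂ) * Complex.I * (b : ℂ) / ((a : ℂ) * (k : ℂ)) * ((‖ν‖ ^ 2 : ℝ) : ℂ) +
        2 * (Real.pi : ℂ) * Complex.I / ((a : ℂ) * (k : ℂ)) *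
          ((inner ℝ ν (-(w lam0) - (a : ℝ) • (w' lam1)) : ℝ) : ℂ)) +
      ((p * K : ℤ) : ℂ) * (2 * (Real.pi : ℂ) * Complex.I) := by
    rw [hip]
    push_cast
    field_simp
    ring
  rw [harg, Complex.exp_add, Complex.exp_int_mul_two_pi_mul_I, mul_one, hdet]
  ring

end Aux5
section Aux6

variable {l : ℕ} (D : RootSystemData l)

lemma lat_root_int : ∀ α ∈ D.Δ, ∀ u ∈ D.corootLattice, ∃ q : ℤ, (inner ℝ u α : ℝ) = q := by
  intro α hα u hu
  induction hu using Submodule.span_induction with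
  | mem x hx =>
    obtain ⟨β, hβ, rfl⟩ := hx
    exact ip_coroot_root_int D β hβ α hα
  | zero => exact ⟨0, by simp⟩
  | add x y hx hy ihx ihy =>
    obtain ⟨n, hn⟩ := ihx
    obtain ⟨m, hm⟩ := ihy
    exact ⟨n + m, by rw [inner_add_left, hn, hm]; push_cast; ring⟩
  | smul z x hx ihx =>
    obtain ⟨n, hn⟩ := ihx
    refine ⟨z * n, ?_⟩
    rw [(Int.cast_smul_eq_zsmul ℝ _ _).symm, real_inner_smul_left, hn]
    push_cast; ring

variable (lam0 lam1 : EucV l) (b a : ℤ) (k : ℕ)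

lemma wt_shift_pair {lam : EucV l} (hlam : lam ∈ D.weightLattice)
    {t : EucV l} (ht : t ∈ D.corootLattice) :
    ∀ u ∈ D.corootLattice, ∃ n : ℤ, (inner ℝ (lam + (k : ℝ) • t) u : ℝ) = n := by
  intro u hu
  obtain ⟨n, hn⟩ := hlam u hu
  obtain ⟨m, hm⟩ := lat_pair_int D t ht u hu
  refine ⟨n + k * m, ?_⟩
  rw [inner_add_left, real_inner_smul_left, hn, hm]
  push_cast; ring

lemma Sfun_transport {w₀ : EucV l ≃ₗᵢ[ℝ] EucV l} (hw₀ : w₀ ∈ D.weyl) (ν : EucV l) :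
    Sfun D lam0 lam1 b a k (w₀ ν) = Sfun D lam0 lam1 b a k ν := by
  unfold Sfun
  rw [← finsum_weyl_reindex D hw₀
    (fun w => ∑ᶠ w' ∈ (D.weyl : Set (EucV l ≃ₗᵢ[ℝ] EucV l)), sumd lam0 lam1 b a k (w₀ ν) w w')]
  apply finsum_mem_congr rfl
  intro w hw
  rw [← finsum_weyl_reindex D hw₀ (fun w' => sumd lam0 lam1 b a k (w₀ ν) (w₀ * w) w')]
  apply finsum_mem_congr rfl
  intro w' hw'
  exact sumd_transport D lam0 lam1 b a k hw₀ w w' ν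

lemma Sfun_shift (hlam0 : lam0 ∈ D.weightLattice) (hlam1 : lam1 ∈ D.weightLattice)
    (ha : a ≠ 0) (hk : k ≠ 0)
    {ν : EucV l} (hν : ∀ u ∈ D.corootLattice, ∃ n : ℤ, (inner ℝ ν u : ℝ) = n)
    {u : EucV l} (hu : u ∈ D.corootLattice) :
    Sfun D lam0 lam1 b a k (ν + ((k : ℝ) * (a : ℝ)) • u) = Sfun D lam0 lam1 b a k ν := by
  unfold Sfun
  apply finsum_mem_congr rfl
  intro w hw
  apply finsum_mem_congr rfl
  intro w' hw'
  exact sumd_shift D lam0 lam1 b a k hlam0 hlam1 ha hk hw hw' hν hu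

lemma Sfun_zero (hlam1 : lam1 ∈ D.weightLattice) (ha : a ≠ 0) (hk : k ≠ 0)
    {α : EucV l} (hα : α ∈ D.Δ)
    {ν : EucV l} {K : ℤ} (hνα : (inner ℝ ν α : ℝ) = (k : ℝ) * (K : ℝ)) :
    Sfun D lam0 lam1 b a k ν = 0 := by
  unfold Sfun
  have hs : rootReflection α ∈ D.weyl := Subgroup.subset_closure ⟨α, hα, rfl⟩
  have inner_zero : ∀ w ∈ (D.weyl : Set (EucV l ≃ₗᵢ[ℝ] EucV l)),
      (∑ᶠ w' ∈ (D.weyl : Set (EucV l ≃ₗᵢ[ℝ] EucV l)), sumd lam0 lam1 b a k ν w w') = 0 := by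
    intro w _
    set A : ℂ := ∑ᶠ w' ∈ (D.weyl : Set (EucV l ≃ₗᵢ[ℝ] EucV l)), sumd lam0 lam1 b a k ν w w'
      with hA
    have h1 : A = ∑ᶠ w' ∈ (D.weyl : Set (EucV l ≃ₗᵢ[ℝ] EucV l)),
        sumd lam0 lam1 b a k ν w (rootReflection α * w') :=
      (finsum_weyl_reindex D hs (fun w' => sumd lam0 lam1 b a k ν w w')).symm
    have h2 : (∑ᶠ w' ∈ (D.weyl : Set (EucV l ≃ₗᵢ[ℝ] EucV l)),
        sumd lam0 lam1 b a k ν w (rootReflection α * w')) =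
        ∑ᶠ w' ∈ (D.weyl : Set (EucV l ≃ₗᵢ[ℝ] EucV l)), (- sumd lam0 lam1 b a k ν w w') := by
      apply finsum_mem_congr rfl
      intro w' hw'
      exact sumd_flip D lam0 lam1 b a k hlam1 ha hk hα hw' w hνα
    have h3 : (∑ᶠ w' ∈ (D.weyl : Set (EucV l ≃ₗᵢ[ℝ] EucV l)),
        (- sumd lam0 lam1 b a k ν w w')) = -A :=
      finsum_mem_neg _ _
    have hAA : A = -A := h1.trans (h2.trans h3)
    have h4 : A + A = 0 := by nth_rewrite 1 [hAA]; ring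
    exact add_self_eq_zero.mp h4
  calc (∑ᶠ w ∈ (D.weyl : Set (EucV l ≃ₗᵢ[ℝ] EucV l)),
        ∑ᶠ w' ∈ (D.weyl : Set (EucV l ≃ₗᵢ[ℝ] EucV l)), sumd lam0 lam1 b a k ν w w')
      = ∑ᶠ w ∈ (D.weyl : Set (EucV l ≃ₗᵢ[ℝ] EucV l)), (0 : ℂ) :=
        finsum_mem_congr rfl inner_zero
    _ = 0 := by simp

/-- reindexing a sum over coset representatives along a map which permutes the cosets. -/
lemma sum_T_reindex {a : ℤ} {T : Finset (EucV l)} (hT : D.IsCorootReps a T)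
    (φ χ : EucV l → EucV l)
    (hφ : ∀ z ∈ D.corootLattice, φ z ∈ D.corootLattice)
    (hχ : ∀ z ∈ D.corootLattice, χ z ∈ D.corootLattice)
    (hφχ : ∀ z ∈ D.corootLattice, ∃ u ∈ D.corootLattice, φ (χ z) - z = a • u)
    (hχφ : ∀ z ∈ D.corootLattice, ∃ u ∈ D.corootLattice, χ (φ z) - z = a • u)
    (hφcong : ∀ z z', z ∈ D.corootLattice → z' ∈ D.corootLattice →
        (∃ u ∈ D.corootLattice, z - z' = a • u) →
        (∃ u ∈ D.corootLattice, φ z - φ z' = a • u))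
    (hχcong : ∀ z z', z ∈ D.corootLattice → z' ∈ D.corootLattice →
        (∃ u ∈ D.corootLattice, z - z' = a • u) →
        (∃ u ∈ D.corootLattice, χ z - χ z' = a • u))
    (f : EucV l → ℂ)
    (hf : ∀ t ∈ D.corootLattice, ∀ z ∈ D.corootLattice,
        (∃ u ∈ D.corootLattice, z - t = a • u) → f z = f t) :
    ∑ μ ∈ T, f (φ μ) = ∑ μ ∈ T, f μ := by
  have hTL : ∀ t ∈ T, t ∈ D.corootLattice := hT.1
  -- uniqueness of representatives
  have uniq : ∀ z ∈ D.corootLattice, ∀ t₁ ∈ T, ∀ t₂ ∈ T,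
      (∃ u ∈ D.corootLattice, z - t₁ = a • u) →
      (∃ u ∈ D.corootLattice, z - t₂ = a • u) → t₁ = t₂ := by
    intro z hz t₁ ht₁ t₂ ht₂ h₁ h₂
    obtain ⟨t, _, huniq⟩ := hT.2 z hz
    rw [huniq t₁ ⟨ht₁, h₁⟩, huniq t₂ ⟨ht₂, h₂⟩]
  -- difference of congruences
  have trans : ∀ z z₁ z₂ : EucV l,
      (∃ u ∈ D.corootLattice, z - z₁ = a • u) →
      (∃ u ∈ D.corootLattice, z - z₂ = a • u) →
      (∃ u ∈ D.corootLattice, z₂ - z₁ = a • u) := by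
    rintro z z₁ z₂ ⟨u₁, hu₁, e₁⟩ ⟨u₂, hu₂, e₂⟩
    refine ⟨u₁ - u₂, Submodule.sub_mem _ hu₁ hu₂, ?_⟩
    rw [smul_sub, ← e₁, ← e₂]
    abel
  have addc : ∀ z z₁ z₂ : EucV l,
      (∃ u ∈ D.corootLattice, z - z₁ = a • u) →
      (∃ u ∈ D.corootLattice, z₁ - z₂ = a • u) →
      (∃ u ∈ D.corootLattice, z - z₂ = a • u) := by
    rintro z z₁ z₂ ⟨u₁, hu₁, e₁⟩ ⟨u₂, hu₂, e₂⟩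
    refine ⟨u₁ + u₂, Submodule.add_mem _ hu₁ hu₂, ?_⟩
    rw [smul_add, ← e₁, ← e₂]
    abel
  refine Finset.sum_bij' (i := fun μ hμ => (hT.2 (φ μ) (hφ μ (hTL μ hμ))).choose)
    (j := fun t ht => (hT.2 (χ t) (hχ t (hTL t ht))).choose) ?_ ?_ ?_ ?_ ?_
  · intro μ hμ
    exact (hT.2 (φ μ) (hφ μ (hTL μ hμ))).choose_spec.1.1
  · intro t ht
    exact (hT.2 (χ t) (hχ t (hTL t ht))).choose_spec.1.1
  · -- left inverse
    intro μ hμ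
    set i := (hT.2 (φ μ) (hφ μ (hTL μ hμ))).choose with hidef
    have hspec := (hT.2 (φ μ) (hφ μ (hTL μ hμ))).choose_spec.1
    have hiT : i ∈ T := hspec.1
    have hicong : ∃ u ∈ D.corootLattice, φ μ - i = a • u := hspec.2
    -- χ i ≡ χ (φ μ) ≡ μ
    have hiL : i ∈ D.corootLattice := hTL i hiT
    have h1 : ∃ u ∈ D.corootLattice, χ (φ μ) - χ i = a • u :=
      hχcong (φ μ) i (hφ μ (hTL μ hμ)) hiL hicong
    have h2 : ∃ u ∈ D.corootLattice, χ (φ μ) - μ = a • u := hχφ μ (hTL μ hμ)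
    have h3 : ∃ u ∈ D.corootLattice, χ i - μ = a • u := by
      have := trans (χ (φ μ)) μ (χ i) h2 h1
      -- this : χ i - μ ≡ 0 ; orientation
      exact this
    have hspec2 := (hT.2 (χ i) (hχ i hiL)).choose_spec.1
    exact uniq (χ i) (hχ i hiL) _ hspec2.1 μ hμ hspec2.2 h3
  · -- right inverse
    intro t ht
    set j := (hT.2 (χ t) (hχ t (hTL t ht))).choose with hjdef
    have hspec := (hT.2 (χ t) (hχ t (hTL t ht))).choose_spec.1
    have hjT : j ∈ T := hspec.1
    have hjcong : ∃ u ∈ D.corootLattice, χ t - j = a • u := hspec.2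
    have hjL : j ∈ D.corootLattice := hTL j hjT
    have h1 : ∃ u ∈ D.corootLattice, φ (χ t) - φ j = a • u :=
      hφcong (χ t) j (hχ t (hTL t ht)) hjL hjcong
    have h2 : ∃ u ∈ D.corootLattice, φ (χ t) - t = a • u := hφχ t (hTL t ht)
    have h3 : ∃ u ∈ D.corootLattice, φ j - t = a • u := by
      exact trans (φ (χ t)) t (φ j) h2 h1
    have hspec2 := (hT.2 (φ j) (hφ j hjL)).choose_spec.1
    exact uniq (φ j) (hφ j hjL) _ hspec2.1 t ht hspec2.2 h3
  · -- summand equality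
    intro μ hμ
    have hspec := (hT.2 (φ μ) (hφ μ (hTL μ hμ))).choose_spec.1
    exact hf _ (hTL _ hspec.1) (φ μ) (hφ μ (hTL μ hμ)) hspec.2

end Aux6
/-- Proposition `prop:inv` of Hansen–Takata.
For fixed `λ₀, λ₁ ∈ X`, integers `b`, `a ≠ 0` and a positive integer `k`, the function
`g(λ) = Σ_{μ ∈ Y∨/aY∨} Σ_{w,w' ∈ W} det(ww')
          exp(πib/(ak)|λ+kμ|² + (2πi/(ak))⟨λ+kμ, −w(λ₀) − a·w'(λ₁)⟩)`
is invariant under the affine Weyl group `W ⋉ kY∨`, and vanishes at every `λ ∈ X`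
with `⟨λ, α⟩ ∈ kℤ` for some positive root `α`. -/
theorem statement1 {l : ℕ} (D : RootSystemData l) (lam0 lam1 : EucV l)
    (hlam0 : lam0 ∈ D.weightLattice) (hlam1 : lam1 ∈ D.weightLattice)
    (b a : ℤ) (ha : a ≠ 0) (k : ℕ) (hk : 0 < k)
    (T : Finset (EucV l)) (hT : D.IsCorootReps a T)
    (g : EucV l → ℂ)
    (hg : ∀ lam : EucV l, g lam =
      ∑ μ ∈ T, ∑ᶠ w ∈ (D.weyl : Set (EucV l ≃ₗᵢ[ℝ] EucV l)),
        ∑ᶠ w' ∈ (D.weyl : Set (EucV l ≃ₗᵢ[ℝ] EucV l)),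
          ((wdet w * wdet w' : ℝ) : ℂ) *
            Complex.exp
              ((Real.pi : ℂ) * Complex.I * (b : ℂ) / ((a : ℂ) * (k : ℂ)) *
                  ((‖lam + (k : ℝ) • μ‖ ^ 2 : ℝ) : ℂ) +
                2 * (Real.pi : ℂ) * Complex.I / ((a : ℂ) * (k : ℂ)) *
                  ((inner ℝ (lam + (k : ℝ) • μ)
                      (-(w lam0) - (a : ℝ) • (w' lam1)) : ℝ) : ℂ))) :
    (∀ lam ∈ D.weightLattice, ∀ w ∈ D.weyl, ∀ y ∈ D.corootLattice,
        g (w lam + (k : ℝ) • y) = g lam) ∧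
      (∀ lam ∈ D.weightLattice,
        (∃ α ∈ D.Δplus, ∃ n : ℤ, (inner ℝ lam α : ℝ) = (n : ℝ) * k) → g lam = 0) := by
  have hk0 : k ≠ 0 := hk.ne'
  have hgS : ∀ lam : EucV l, g lam = ∑ μ ∈ T, Sfun D lam0 lam1 b a k (lam + (k : ℝ) • μ) := by
    intro lam
    rw [hg lam]
    rfl
  constructor
  · intro lam hlam w₀ hw₀ y hy
    rw [hgS, hgS]
    have step1 : ∀ μ ∈ T, Sfun D lam0 lam1 b a k (w₀ lam + (k : ℝ) • y + (k : ℝ) • μ)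
        = Sfun D lam0 lam1 b a k (lam + (k : ℝ) • (w₀⁻¹ (y + μ))) := by
      intro μ hμ
      have hveq : w₀ lam + (k : ℝ) • y + (k : ℝ) • μ
          = w₀ (lam + (k : ℝ) • (w₀⁻¹ (y + μ))) := by
        rw [map_add, LinearIsometryEquiv.map_smul, LinearIsometryEquiv.inv_def,
          LinearIsometryEquiv.apply_symm_apply, smul_add]
        abel
      rw [hveq, Sfun_transport D lam0 lam1 b a k hw₀]
    rw [Finset.sum_congr rfl step1]
    have hw₀i : w₀⁻¹ ∈ D.weyl := Subgroup.inv_mem _ hw₀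
    have hφ : ∀ z ∈ D.corootLattice, w₀⁻¹ (y + z) ∈ D.corootLattice := fun z hz =>
      weyl_maps_lat D w₀⁻¹ hw₀i _ (Submodule.add_mem _ hy hz)
    have hχ : ∀ z ∈ D.corootLattice, w₀ z - y ∈ D.corootLattice := fun z hz =>
      Submodule.sub_mem _ (weyl_maps_lat D w₀ hw₀ z hz) hy
    exact sum_T_reindex D hT (fun z => w₀⁻¹ (y + z)) (fun z => w₀ z - y) hφ hχ
      (fun z hz => ⟨0, Submodule.zero_mem _, by
        rw [show y + (w₀ z - y) = w₀ z from by abel, LinearIsometryEquiv.inv_def,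
          LinearIsometryEquiv.symm_apply_apply]
        simp⟩)
      (fun z hz => ⟨0, Submodule.zero_mem _, by
        rw [LinearIsometryEquiv.inv_def, LinearIsometryEquiv.apply_symm_apply]
        simp⟩)
      (fun z z' hz hz' => by
        rintro ⟨u, hu, e⟩
        refine ⟨w₀⁻¹ u, weyl_maps_lat D w₀⁻¹ hw₀i u hu, ?_⟩
        rw [← map_sub, show y + z - (y + z') = z - z' from by abel, e,
          ← Int.cast_smul_eq_zsmul ℝ a u, LinearIsometryEquiv.map_smul,
          Int.cast_smul_eq_zsmul ℝ])
      (fun z z' hz hz' => by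
        rintro ⟨u, hu, e⟩
        refine ⟨w₀ u, weyl_maps_lat D w₀ hw₀ u hu, ?_⟩
        rw [show w₀ z - y - (w₀ z' - y) = w₀ z - w₀ z' from by abel, ← map_sub, e,
          ← Int.cast_smul_eq_zsmul ℝ a u, LinearIsometryEquiv.map_smul,
          Int.cast_smul_eq_zsmul ℝ])
      (fun z => Sfun D lam0 lam1 b a k (lam + (k : ℝ) • z))
      (fun t ht z hz => by
        rintro ⟨u, hu, e⟩
        have hz' : lam + (k : ℝ) • z = (lam + (k : ℝ) • t) + ((k : ℝ) * (a : ℝ)) • u := by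
          have hze : z = t + (a : ℤ) • u := by
            rw [← e]; abel
          rw [hze, ← Int.cast_smul_eq_zsmul ℝ a u]
          module
        rw [hz']
        exact Sfun_shift D lam0 lam1 b a k hlam0 hlam1 ha hk0
          (wt_shift_pair D k hlam ht) hu)
  · rintro lam hlam ⟨α, hαp, n, hnα⟩
    have hα : α ∈ D.Δ := (Finset.mem_filter.mp hαp).1
    rw [hgS]
    apply Finset.sum_eq_zero
    intro μ hμ
    have hμL : μ ∈ D.corootLattice := hT.1 μ hμ
    obtain ⟨q, hq⟩ := lat_root_int D α hα μ hμL
    have hνα : (inner ℝ (lam + (k : ℝ) • μ) α : ℝ) = (k : ℝ) * ((n + q : ℤ) : ℝ) := by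
      rw [inner_add_left, real_inner_smul_left, hnα, hq]
      push_cast; ring
    exact Sfun_zero D lam0 lam1 b a k hlam1 ha hk0 hα hνα
end
end

section
/- Let U = [[a,b],[c,d]] represent an element of PSL(2,ℤ) = SL(2,ℤ)/{±1} with c ≠ 0. Then there exists n ∈ ℤ such that: if a = 0 then U = ΞΘⁿ in PSL(2,ℤ); and if a ≠ 0 then there exists a tuple of integers 𝒞 = (m₁,…,m_t) with U = B^𝒞 Θⁿ in PSL(2,ℤ) and a_k^𝒞 ≠ 0 for every k = 1,…,t. -/
noncomputable section

/-- The generator `Ξ = [[0,-1],[1,0]]` of `SL(2,ℤ)`. -/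
def XiSL : Matrix.SpecialLinearGroup (Fin 2) ℤ :=
  ⟨!![0, -1; 1, 0], by norm_num [Matrix.det_fin_two_of]⟩

/-- The generator `Θ = [[1,1],[0,1]]` of `SL(2,ℤ)`. -/
def ThSL : Matrix.SpecialLinearGroup (Fin 2) ℤ :=
  ⟨!![1, 1; 0, 1], by norm_num [Matrix.det_fin_two_of]⟩

/-- The element `-1` of `SL(2,ℤ)`. -/
def negIdSL : Matrix.SpecialLinearGroup (Fin 2) ℤ :=
  ⟨!![-1, 0; 0, -1], by norm_num [Matrix.det_fin_two_of]⟩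

def XiInv : Matrix.SpecialLinearGroup (Fin 2) ℤ :=
  ⟨!![0, 1; -1, 0], by norm_num [Matrix.det_fin_two_of]⟩

lemma coe_Xi : (XiSL : Matrix (Fin 2) (Fin 2) ℤ) = !![0,-1;1,0] := rfl
lemma coe_XiInv : (XiInv : Matrix (Fin 2) (Fin 2) ℤ) = !![0,1;-1,0] := rfl
lemma coe_Th : (ThSL : Matrix (Fin 2) (Fin 2) ℤ) = !![1,1;0,1] := rfl

lemma Xi_mul_XiInv : XiSL * XiInv = 1 := by
  apply Subtype.ext
  rw [Matrix.SpecialLinearGroup.coe_mul, coe_Xi, coe_XiInv]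
  ext i j
  fin_cases i <;> fin_cases j <;>
    simp [Matrix.mul_apply, Fin.sum_univ_two, Matrix.one_apply]

lemma Th_inv : ThSL⁻¹ = ⟨!![1,-1;0,1], by norm_num [Matrix.det_fin_two_of]⟩ := by
  apply inv_eq_of_mul_eq_one_right
  apply Subtype.ext
  show (ThSL : Matrix (Fin 2) (Fin 2) ℤ) * _ = _
  rw [coe_Th]
  ext i j
  fin_cases i <;> fin_cases j <;>
    simp [Matrix.mul_apply, Fin.sum_univ_two, Matrix.one_apply]

lemma coe_Th_zpow (n : ℤ) : ((ThSL ^ n : Matrix.SpecialLinearGroup (Fin 2) ℤ) : Matrix (Fin 2) (Fin 2) ℤ) = !![1,n;0,1] := by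
  induction n using Int.induction_on with
  | zero =>
      rw [zpow_zero]
      show (1 : Matrix (Fin 2) (Fin 2) ℤ) = _
      ext i j
      fin_cases i <;> fin_cases j <;> simp [Matrix.one_apply]
  | succ k ih =>
      rw [zpow_add_one, Matrix.SpecialLinearGroup.coe_mul, ih, coe_Th]
      ext i j
      fin_cases i <;> fin_cases j <;>
        simp [Matrix.mul_apply, Fin.sum_univ_two] <;> ring
  | pred k ih =>
      rw [zpow_sub_one, Matrix.SpecialLinearGroup.coe_mul, ih, Th_inv]
      show !![1,(-k : ℤ);0,1] * !![1,-1;0,1] = _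
      ext i j
      fin_cases i <;> fin_cases j <;>
        simp [Matrix.mul_apply, Fin.sum_univ_two] <;> ring

lemma coe_negId : (negIdSL : Matrix (Fin 2) (Fin 2) ℤ) = -1 := by
  show !![(-1 : ℤ),0;0,-1] = _
  ext i j
  fin_cases i <;> fin_cases j <;> simp [Matrix.one_apply]

lemma negId_comm (A : Matrix.SpecialLinearGroup (Fin 2) ℤ) : negIdSL * A = A * negIdSL := by
  apply Subtype.ext
  rw [Matrix.SpecialLinearGroup.coe_mul, Matrix.SpecialLinearGroup.coe_mul, coe_negId,
    neg_one_mul, mul_neg_one]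

lemma mul_negId_left (X Y : Matrix.SpecialLinearGroup (Fin 2) ℤ) :
    X * (negIdSL * Y) = negIdSL * (X * Y) := by
  rw [← mul_assoc, ← negId_comm, mul_assoc]


/-- `B_k^𝒞 = Θ^{m_k} Ξ Θ^{m_{k-1}} Ξ ⋯ Θ^{m_1} Ξ` for the tuple `𝒞 = (m 1, …, m k)`
of integers, with `B_0^𝒞 = 1`. -/
def BSL (m : ℕ → ℤ) : ℕ → Matrix.SpecialLinearGroup (Fin 2) ℤ
  | 0 => 1
  | k + 1 => ThSL ^ (m (k + 1)) * XiSL * BSL m k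

lemma BSL_congr (m1 m2 : ℕ → ℤ) (k : ℕ) (h : ∀ i, 1 ≤ i → i ≤ k → m1 i = m2 i) :
    BSL m1 k = BSL m2 k := by
  induction k with
  | zero => rfl
  | succ k ih =>
      show ThSL ^ (m1 (k+1)) * XiSL * BSL m1 k = ThSL ^ (m2 (k+1)) * XiSL * BSL m2 k
      rw [h (k+1) (by omega) le_rfl, ih (fun i h1 h2 => h i h1 (by omega))]

lemma X00_ne (U X : Matrix.SpecialLinearGroup (Fin 2) ℤ) (n : ℤ)
    (h : U = X * ThSL ^ n ∨ U = negIdSL * (X * ThSL ^ n))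
    (ha : (U : Matrix (Fin 2) (Fin 2) ℤ) 0 0 ≠ 0) :
    (X : Matrix (Fin 2) (Fin 2) ℤ) 0 0 ≠ 0 := by
  have h1 : ((X * ThSL ^ n : Matrix.SpecialLinearGroup (Fin 2) ℤ) :
      Matrix (Fin 2) (Fin 2) ℤ) 0 0 = (X : Matrix (Fin 2) (Fin 2) ℤ) 0 0 := by
    rw [Matrix.SpecialLinearGroup.coe_mul, coe_Th_zpow]
    simp [Matrix.mul_apply, Fin.sum_univ_two]
  rcases h with h | h
  · rw [h, h1] at ha; exact ha
  · rw [h, Matrix.SpecialLinearGroup.coe_mul, coe_negId, neg_one_mul, Matrix.neg_apply, h1] at ha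
    intro h0; rw [h0] at ha; simp at ha

lemma key : ∀ (N : ℕ) (U : Matrix.SpecialLinearGroup (Fin 2) ℤ),
    ((U : Matrix (Fin 2) (Fin 2) ℤ) 1 0).natAbs ≤ N →
    (U : Matrix (Fin 2) (Fin 2) ℤ) 0 0 ≠ 0 →
    (U : Matrix (Fin 2) (Fin 2) ℤ) 1 0 ≠ 0 →
    ∃ (n : ℤ) (t : ℕ) (m : ℕ → ℤ), 1 ≤ t ∧
      (U = BSL m t * ThSL ^ n ∨ U = negIdSL * (BSL m t * ThSL ^ n)) ∧
      ∀ k, 1 ≤ k → k ≤ t →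
        ((BSL m k : Matrix.SpecialLinearGroup (Fin 2) ℤ) :
          Matrix (Fin 2) (Fin 2) ℤ) 0 0 ≠ 0 := by
  intro N
  induction N with
  | zero =>
      intro U hN _ hc
      exact absurd (Int.natAbs_eq_zero.mp (Nat.le_zero.mp hN)) hc
  | succ N ih =>
      intro U hN ha hc
      set a : ℤ := (U : Matrix (Fin 2) (Fin 2) ℤ) 0 0 with ha_def
      set b : ℤ := (U : Matrix (Fin 2) (Fin 2) ℤ) 0 1 with hb_def
      set c : ℤ := (U : Matrix (Fin 2) (Fin 2) ℤ) 1 0 with hc_def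
      set d : ℤ := (U : Matrix (Fin 2) (Fin 2) ℤ) 1 1 with hd_def
      have hUeta : (U : Matrix (Fin 2) (Fin 2) ℤ) = !![a, b; c, d] :=
        Matrix.eta_fin_two _
      set q : ℤ := a / c with hq_def
      set r : ℤ := a % c with hr_def
      have hdiv : a = c * q + r := (Int.mul_ediv_add_emod a c).symm
      have hr0 : 0 ≤ r := Int.emod_nonneg a hc
      have hrlt : r < |c| := by
        rcases lt_or_gt_of_ne hc with h | h
        · rw [hr_def, ← Int.emod_neg]
          calc a % (-c) < -c := Int.emod_lt_of_pos a (by omega)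
          _ = |c| := by rw [abs_of_neg h]
        · rw [abs_of_pos h]; exact Int.emod_lt_of_pos a h
      -- V = XiInv * ThSL^(-q) * U
      set V : Matrix.SpecialLinearGroup (Fin 2) ℤ :=
        XiInv * (ThSL ^ (-q) * U) with hV_def
      have hU : U = ThSL ^ q * XiSL * V := by
        rw [hV_def, mul_assoc, ← mul_assoc XiSL, Xi_mul_XiInv, one_mul,
          ← mul_assoc, ← zpow_add, add_neg_cancel, zpow_zero, one_mul]
      have hVcoe : (V : Matrix (Fin 2) (Fin 2) ℤ)
          = !![c, d; q * c - a, q * d - b] := by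
        rw [hV_def, Matrix.SpecialLinearGroup.coe_mul, Matrix.SpecialLinearGroup.coe_mul,
          coe_XiInv, coe_Th_zpow, hUeta]
        ext i j
        fin_cases i <;> fin_cases j <;>
          simp [Matrix.mul_apply, Fin.sum_univ_two] <;> ring
      have hV00 : (V : Matrix (Fin 2) (Fin 2) ℤ) 0 0 = c := by rw [hVcoe]; simp
      have hV10 : (V : Matrix (Fin 2) (Fin 2) ℤ) 1 0 = -r := by
        have e : (!![c, d; q * c - a, q * d - b] : Matrix (Fin 2) (Fin 2) ℤ) 1 0
            = q * c - a := by simp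
        rw [hVcoe, e]
        linear_combination -hdiv
      by_cases hrz : r = 0
      · -- base: V is upper triangular, V = ± ThSL^v
        have hdet : (V : Matrix (Fin 2) (Fin 2) ℤ) 0 0 * (V : Matrix (Fin 2) (Fin 2) ℤ) 1 1 = 1 := by
          have hdv := V.2
          rw [Matrix.det_fin_two, hV10, hrz] at hdv
          simpa using hdv
        set v : ℤ := (V : Matrix (Fin 2) (Fin 2) ℤ) 0 1 with hv_def
        set w : ℤ := (V : Matrix (Fin 2) (Fin 2) ℤ) 1 1 with hw_def
        have hVeta : (V : Matrix (Fin 2) (Fin 2) ℤ) = !![c, v; 0, w] := by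
          rw [Matrix.eta_fin_two ((V : Matrix (Fin 2) (Fin 2) ℤ))]
          rw [hV00, hV10, hrz]
          norm_num
          exact ⟨rfl, rfl⟩
        rcases Int.eq_one_or_neg_one_of_mul_eq_one' hdet with ⟨h1, h2⟩ | ⟨h1, h2⟩
        · -- V = ThSL ^ v
          have hVeq : V = ThSL ^ v := by
            apply Subtype.ext
            rw [coe_Th_zpow, hVeta, show c = 1 from by rw [← hV00, h1], h2]
          refine ⟨v, 1, fun _ => q, le_rfl, ?_, ?_⟩
          · left
            rw [hU, hVeq]
            show _ = ThSL ^ q * XiSL * 1 * ThSL ^ v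
            rw [mul_one]
          · intro k h1k hk1
            have : k = 1 := by omega
            subst this
            exact X00_ne U _ v (by left; rw [hU, hVeq]; show _ = ThSL ^ q * XiSL * 1 * ThSL ^ v; rw [mul_one]) ha
        · -- V = negIdSL * ThSL ^ (-v)
          have hVeq : V = negIdSL * ThSL ^ (-v) := by
            apply Subtype.ext
            have hrhs : ((negIdSL * ThSL ^ (-v) : Matrix.SpecialLinearGroup (Fin 2) ℤ) :
                Matrix (Fin 2) (Fin 2) ℤ) = -(!![1,-v;0,1]) := by
              rw [Matrix.SpecialLinearGroup.coe_mul, coe_negId, coe_Th_zpow, neg_one_mul]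
            rw [hrhs, hVeta, show c = -1 from by rw [← hV00, h1], h2]
            ext i j
            fin_cases i <;> fin_cases j <;> simp
          refine ⟨-v, 1, fun _ => q, le_rfl, ?_, ?_⟩
          · right
            rw [hU, hVeq, mul_negId_left]
            show _ = negIdSL * (ThSL ^ q * XiSL * 1 * ThSL ^ (-v))
            rw [mul_one, mul_assoc]
          · intro k h1k hk1
            have : k = 1 := by omega
            subst this
            refine X00_ne U _ (-v) (Or.inr ?_) ha
            rw [hU, hVeq, mul_negId_left]
            show _ = negIdSL * (ThSL ^ q * XiSL * 1 * ThSL ^ (-v))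
            rw [mul_one, mul_assoc]
      · -- inductive step
        have hV10ne : (V : Matrix (Fin 2) (Fin 2) ℤ) 1 0 ≠ 0 := by rw [hV10]; omega
        have hV00ne : (V : Matrix (Fin 2) (Fin 2) ℤ) 0 0 ≠ 0 := by rw [hV00]; exact hc
        have hsize : ((V : Matrix (Fin 2) (Fin 2) ℤ) 1 0).natAbs ≤ N := by
          have h1 : c.natAbs ≤ N + 1 := hN
          have h2 : r.natAbs < c.natAbs := by
            have : (r.natAbs : ℤ) < (c.natAbs : ℤ) := by
              rw [Int.natAbs_of_nonneg hr0, ← Int.abs_eq_natAbs]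
              exact hrlt
            exact_mod_cast this
          rw [hV10, Int.natAbs_neg]
          omega
        obtain ⟨n, t, m', h1t, hdec, hak⟩ := ih V hsize hV00ne hV10ne
        set m'' : ℕ → ℤ := Function.update m' (t + 1) q with hm''
        have hcongr : BSL m'' t = BSL m' t := by
          apply BSL_congr
          intro i _ h2
          rw [hm'', Function.update_of_ne (by omega)]
        have hBsucc : BSL m'' (t + 1) = ThSL ^ q * XiSL * BSL m' t := by
          show ThSL ^ (m'' (t+1)) * XiSL * BSL m'' t = _
          rw [hcongr, hm'', Function.update_self]
        refine ⟨n, t + 1, m'', by omega, ?_, ?_⟩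
        · rcases hdec with h | h
          · left
            rw [hU, h, hBsucc]
            group
          · right
            rw [hU, h, hBsucc, mul_negId_left]
            group
        · intro k h1k hkt
          by_cases hk : k ≤ t
          · rw [BSL_congr m'' m' k (fun i _ h2 => by
              rw [hm'', Function.update_of_ne (by omega)])]
            exact hak k h1k hk
          · have : k = t + 1 := by omega
            subst this
            refine X00_ne U _ n ?_ ha
            rcases hdec with h | h
            · left; rw [hU, h, hBsucc]; group
            · right
              rw [hU, h, hBsucc, mul_negId_left]
              group

/-- Lemma `lem:matrixdecomposition` of Hansen–Takata.
Let `U = [[a,b],[c,d]]` represent an element of `PSL(2,ℤ) = SL(2,ℤ)/{±1}` with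
`c ≠ 0`.  Then there is an `n ∈ ℤ` such that: if `a = 0` then `U = ΞΘⁿ` in
`PSL(2,ℤ)`; and if `a ≠ 0` there is a tuple of integers `𝒞 = (m₁,…,m_t)` with
`U = B^𝒞 Θⁿ` in `PSL(2,ℤ)` and `a_k^𝒞 ≠ 0` for every `k = 1,…,t`. -/
theorem statement3 (U : Matrix.SpecialLinearGroup (Fin 2) ℤ)
    (hc : (U : Matrix (Fin 2) (Fin 2) ℤ) 1 0 ≠ 0) :
    ∃ n : ℤ,
      ((U : Matrix (Fin 2) (Fin 2) ℤ) 0 0 = 0 →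
        U = XiSL * ThSL ^ n ∨ U = negIdSL * (XiSL * ThSL ^ n)) ∧
      ((U : Matrix (Fin 2) (Fin 2) ℤ) 0 0 ≠ 0 →
        ∃ (t : ℕ) (m : ℕ → ℤ), 1 ≤ t ∧
          (U = BSL m t * ThSL ^ n ∨ U = negIdSL * (BSL m t * ThSL ^ n)) ∧
          ∀ k, 1 ≤ k → k ≤ t →
            ((BSL m k : Matrix.SpecialLinearGroup (Fin 2) ℤ) :
              Matrix (Fin 2) (Fin 2) ℤ) 0 0 ≠ 0) := by
  by_cases h0 : (U : Matrix (Fin 2) (Fin 2) ℤ) 0 0 = 0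
  · have hdet := U.2
    rw [Matrix.det_fin_two, h0] at hdet
    have hbc : (U : Matrix (Fin 2) (Fin 2) ℤ) 0 1 * (-(U : Matrix (Fin 2) (Fin 2) ℤ) 1 0) = 1 := by
      linarith
    have hXiTh : ∀ n : ℤ, ((XiSL * ThSL ^ n : Matrix.SpecialLinearGroup (Fin 2) ℤ) :
        Matrix (Fin 2) (Fin 2) ℤ) = !![0,-1;1,n] := by
      intro n
      rw [Matrix.SpecialLinearGroup.coe_mul, coe_Xi, coe_Th_zpow]
      ext i j
      fin_cases i <;> fin_cases j <;> simp [Matrix.mul_apply, Fin.sum_univ_two]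
    rcases Int.eq_one_or_neg_one_of_mul_eq_one' hbc with ⟨hb, hcc⟩ | ⟨hb, hcc⟩
    · -- b = 1, c = -1 : U = negIdSL * (Xi * Th ^ (-d))
      refine ⟨-((U : Matrix (Fin 2) (Fin 2) ℤ) 1 1), fun _ => Or.inr ?_, fun h => absurd h0 h⟩
      apply Subtype.ext
      rw [Matrix.SpecialLinearGroup.coe_mul, coe_negId, hXiTh, neg_one_mul]
      ext i j
      fin_cases i <;> fin_cases j <;> simp [h0, hb] <;> omega
    · -- b = -1, c = 1 : U = Xi * Th ^ d
      refine ⟨(U : Matrix (Fin 2) (Fin 2) ℤ) 1 1, fun _ => Or.inl ?_, fun h => absurd h0 h⟩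
      apply Subtype.ext
      rw [hXiTh]
      ext i j
      fin_cases i <;> fin_cases j <;> simp [h0, hb] <;> omega
  · obtain ⟨n, t, m, h1t, hdec, hak⟩ :=
      key ((U : Matrix (Fin 2) (Fin 2) ℤ) 1 0).natAbs U le_rfl h0 hc
    exact ⟨n, fun h => absurd h h0, fun _ => ⟨t, m, h1t, hdec, hak⟩⟩
end
end

section
/- Let κ be a positive integer, let α, β be coprime integers with α > 0, and let β* ∈ ℤ satisfy ββ* ≡ 1 (mod α). Define F : X × Y∨ × W → ℂ by F(λ,ν,w) = det(w) · exp(−(πi/(κα))·[β|λ|² + 2⟨λ, κν + w(ρ)⟩ + β*|κν + w(ρ)|²]). Then F is invariant under each of the transformations (for every x ∈ Y∨): (a) (λ,ν,w) ↦ (λ ± κx, ν ∓ βx, w); (b) (λ,ν,w) ↦ (λ, ν ± αx, w); (c) (λ,ν,w) ↦ (λ ± κα x, ν, w). -/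
open scoped BigOperators Classical
open Complex

noncomputable section

/-! ### Auxiliary lemmas -/

namespace HT

open RootSystemData

variable {l : ℕ}

local notation "⟪" x ", " y "⟫" => (inner ℝ x y : ℝ)

lemma rr_apply (α v : EucV l) :
    rootReflection α v = v - (2 * ⟪α, v⟫ / ⟪α, α⟫) • α := by
  rw [rootReflection, Submodule.reflection_orthogonal_apply, Submodule.reflection_singleton_apply,
    real_inner_self_eq_norm_sq]
  simp only [RCLike.ofReal_real_eq_id, id_eq]
  all_goals rw [two_smul]
  all_goals module

lemma rr_rr (α v : EucV l) : rootReflection α (rootReflection α v) = v :=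
  Submodule.reflection_reflection _ _

lemma rr_self (α : EucV l) : rootReflection α α = -α :=
  Submodule.reflection_orthogonalComplement_singleton_eq_neg α

lemma rr_inv (α : EucV l) : (rootReflection α)⁻¹ = rootReflection α := by
  ext v
  rw [LinearIsometryEquiv.coe_inv]
  rw [rootReflection, Submodule.reflection_symm]

lemma inner_self_pos_of_mem (D : RootSystemData l) {γ : EucV l} (hγ : γ ∈ D.Δ) :
    0 < ⟪γ, γ⟫ := by
  have hne : γ ≠ 0 := fun h => D.zero_not_mem (h ▸ hγ)
  rw [real_inner_self_eq_norm_sq]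
  exact pow_pos (norm_pos_iff.mpr hne) 2

lemma pairing_int (D : RootSystemData l) {γ δ : EucV l} (hγ : γ ∈ D.Δ) (hδ : δ ∈ D.Δ) :
    ∃ n : ℤ, ⟪δ, coroot γ⟫ = (n : ℝ) := by
  obtain ⟨n, hn⟩ := D.crystallographic γ hγ δ hδ
  refine ⟨n, ?_⟩
  have hg : ⟪γ, γ⟫ ≠ 0 := (inner_self_pos_of_mem D hγ).ne'
  rw [coroot, real_inner_smul_right]
  rw [real_inner_comm δ γ] at hn
  rw [div_mul_eq_mul_div, div_eq_iff hg]
  linarith [hn]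

lemma weyl_root_aux (D : RootSystemData l) :
    ∀ w ∈ D.weyl, ∀ γ ∈ D.Δ, w γ ∈ D.Δ ∧ w⁻¹ γ ∈ D.Δ := by
  intro w hw
  induction hw using Subgroup.closure_induction with
  | mem x hx =>
      obtain ⟨a, ha, rfl⟩ := hx
      intro γ hγ
      refine ⟨D.reflect_mem a ha γ hγ, ?_⟩
      rw [rr_inv]
      exact D.reflect_mem a ha γ hγ
  | one => intro γ hγ; simpa using hγ
  | mul x y hx hy px py =>
      intro γ hγ
      constructor
      · have : (x * y) γ = x (y γ) := rfl
        rw [this]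
        exact (px (y γ) (py γ hγ).1).1
      · have : (x * y)⁻¹ γ = y⁻¹ (x⁻¹ γ) := by rw [mul_inv_rev]; rfl
        rw [this]
        exact (py (x⁻¹ γ) (px γ hγ).2).2
  | inv x hx px =>
      intro γ hγ
      refine ⟨(px γ hγ).2, ?_⟩
      rw [inv_inv]
      exact (px γ hγ).1

lemma weyl_root (D : RootSystemData l) {w : EucV l ≃ₗᵢ[ℝ] EucV l} (hw : w ∈ D.weyl)
    {γ : EucV l} (hγ : γ ∈ D.Δ) : w γ ∈ D.Δ :=
  (weyl_root_aux D w hw γ hγ).1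

lemma map_coroot (w : EucV l ≃ₗᵢ[ℝ] EucV l) (δ : EucV l) :
    w (coroot δ) = coroot (w δ) := by
  rw [coroot, coroot, LinearIsometryEquiv.map_smul, LinearIsometryEquiv.inner_map_map]

lemma weyl_lattice (D : RootSystemData l) {w : EucV l ≃ₗᵢ[ℝ] EucV l} (hw : w ∈ D.weyl)
    {x : EucV l} (hx : x ∈ D.corootLattice) : w x ∈ D.corootLattice := by
  induction hx using Submodule.span_induction with
  | mem u hu =>
      obtain ⟨δ, hδ, rfl⟩ := hu
      rw [map_coroot]
      exact Submodule.subset_span ⟨w δ, weyl_root D hw hδ, rfl⟩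
  | zero => simpa using Submodule.zero_mem _
  | add u v hu hv pu pv => rw [map_add]; exact Submodule.add_mem _ pu pv
  | smul m u hu pu => rw [map_zsmul]; exact Submodule.smul_mem _ m pu

lemma pair_long_core {g : ℝ} {M N : ℤ} (hg0 : 0 < g) (hg2 : g ≤ 2)
    (hMg : (M : ℝ) * g = 2 * N) (hN : 0 < N) (hCS : (N : ℝ) * N ≤ 2 * g) :
    ∃ n : ℤ, 2 = (n : ℝ) * g := by
  have hM : 0 < M := by
    by_contra hM
    push_neg at hM
    have : (M : ℝ) * g ≤ 0 := mul_nonpos_of_nonpos_of_nonneg (by exact_mod_cast hM) hg0.le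
    have : (0 : ℝ) < 2 * N := by positivity
    linarith
  -- N ≤ M
  have hNM : N ≤ M := by
    have hM' : (0:ℝ) ≤ (M:ℝ) := by exact_mod_cast hM.le
    have : (N : ℝ) ≤ M := by nlinarith [mul_nonneg hM' (by linarith : (0:ℝ) ≤ 2 - g)]
    exact_mod_cast this
  -- N * M ≤ 4
  have hNM4 : N * M ≤ 4 := by
    have hM' : (0:ℝ) ≤ (M:ℝ) := by exact_mod_cast hM.le
    have h1 : (N : ℝ) * (N * M) ≤ 4 * N := by
      nlinarith [mul_le_mul_of_nonneg_right hCS hM']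
    have h2 : (N : ℝ) * (N * M) ≤ 4 * N → (N:ℤ) * (N * M) ≤ 4 * N := by
      intro h; exact_mod_cast h
    have h3 := h2 h1
    nlinarith
  have : N = 1 ∨ (N = 2 ∧ M = 2) := by
    rcases lt_or_ge N 2 with h | h
    · left; omega
    · right
      constructor <;> nlinarith
  rcases this with rfl | ⟨rfl, rfl⟩
  · exact ⟨M, by push_cast at hMg ⊢; linarith⟩
  · exact ⟨1, by push_cast; push_cast at hMg; linarith⟩

lemma pair_long (D : RootSystemData l) {γ θ : EucV l} (hγ : γ ∈ D.Δ) (hθ : θ ∈ D.Δ)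
    (hθ2 : ⟪θ, θ⟫ = 2) (hne : ⟪γ, θ⟫ ≠ 0) :
    ∃ n : ℤ, 2 = (n : ℝ) * ⟪γ, γ⟫ := by
  obtain ⟨m, hm⟩ := D.crystallographic γ hγ θ hθ
  obtain ⟨n, hn⟩ := D.crystallographic θ hθ γ hγ
  rw [hθ2] at hn
  rw [real_inner_comm γ θ] at hn
  -- hn : 2 * ⟪γ,θ⟫ = n * 2, so ⟪γ,θ⟫ = n
  have hγθ : ⟪γ, θ⟫ = (n : ℝ) := by linarith
  have hg0 : 0 < ⟪γ, γ⟫ := inner_self_pos_of_mem D hγ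
  have hg2 : ⟪γ, γ⟫ ≤ 2 := D.normalized γ hγ
  have hCS : ⟪γ, θ⟫ * ⟪γ, θ⟫ ≤ ⟪γ, γ⟫ * 2 := by
    have := real_inner_mul_inner_self_le γ θ
    rw [hθ2] at this
    exact this
  have hn0 : n ≠ 0 := by
    intro h
    rw [h] at hγθ
    exact hne (by exact_mod_cast hγθ)
  rcases lt_or_gt_of_ne hn0 with h | h
  · exact pair_long_core hg0 hg2
      (M := -m) (N := -n) (by push_cast; rw [hγθ] at hm; push_cast at hm; linarith)
      (by omega) (by push_cast; rw [hγθ] at hCS; push_cast at hCS; nlinarith)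
  · exact pair_long_core hg0 hg2
      (M := m) (N := n) (by rw [hγθ] at hm; push_cast at hm ⊢; linarith)
      h (by rw [hγθ] at hCS; push_cast at hCS ⊢; nlinarith)

lemma base_ortho_zero (D : RootSystemData l) {v : EucV l} (hv : v ∈ D.Δ)
    (hall : ∀ i, ⟪D.base i, v⟫ = 0) : ⟪v, v⟫ = 0 := by
  rcases D.base_pos_or_neg v hv with ⟨c, hcc⟩ | ⟨c, hcc⟩
  · nth_rewrite 1 [hcc]
    rw [sum_inner]
    exact Finset.sum_eq_zero fun i _ => by rw [real_inner_smul_left, hall i, mul_zero]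
  · nth_rewrite 1 [hcc]
    rw [inner_neg_left, sum_inner,
      Finset.sum_eq_zero fun i _ => by rw [real_inner_smul_left, hall i, mul_zero], neg_zero]

lemma ortho_span {x : EucV l} {O : Set (EucV l)} (h : ∀ u ∈ O, ⟪x, u⟫ = 0) :
    ∀ v ∈ Submodule.span ℝ O, ⟪x, v⟫ = 0 := by
  intro v hv
  induction hv using Submodule.span_induction with
  | mem u hu => exact h u hu
  | zero => simp
  | add u v hu hv pu pv => rw [inner_add_right, pu, pv]; ring
  | smul a u hu pu => rw [real_inner_smul_right, pu]; ring

lemma exists_nonortho (D : RootSystemData l) {γ θ : EucV l} (hγ : γ ∈ D.Δ)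
    (hθ : θ ∈ D.Δ) (hθθ : ⟪θ, θ⟫ ≠ 0) :
    ∃ w ∈ D.weyl, ⟪w γ, θ⟫ ≠ 0 := by
  by_contra hcon
  push_neg at hcon
  set O : Set (EucV l) := {u | ∃ w ∈ D.weyl, u = w γ} with hO
  set U := Submodule.span ℝ O with hU
  have dich : ∀ β ∈ D.Δ, β ∈ U ∨ ∀ u ∈ O, ⟪β, u⟫ = 0 := by
    intro β hβ
    by_cases hc : ∀ u ∈ O, ⟪β, u⟫ = 0
    · exact Or.inr hc
    · left
      push_neg at hc
      obtain ⟨u, huO, hbu⟩ := hc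
      have hsβ : rootReflection β ∈ D.weyl := Subgroup.subset_closure ⟨β, hβ, rfl⟩
      obtain ⟨w, hw, rfl⟩ := huO
      have h2 : rootReflection β (w γ) ∈ O :=
        ⟨rootReflection β * w, mul_mem hsβ hw, rfl⟩
      have hUu : w γ ∈ U := Submodule.subset_span ⟨w, hw, rfl⟩
      have hUsu : rootReflection β (w γ) ∈ U := Submodule.subset_span h2
      have hveq : (2 * ⟪β, w γ⟫ / ⟪β, β⟫) • β = w γ - rootReflection β (w γ) := by
        rw [rr_apply]; abel
      have hmem : (2 * ⟪β, w γ⟫ / ⟪β, β⟫) • β ∈ U := by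
        rw [hveq]; exact Submodule.sub_mem _ hUu hUsu
      have hβ0 : ⟪β, β⟫ ≠ 0 := (inner_self_pos_of_mem D hβ).ne'
      have hcoef : 2 * ⟪β, w γ⟫ / ⟪β, β⟫ ≠ 0 := by
        apply div_ne_zero _ hβ0
        intro h
        exact hbu (by linarith)
      exact (Submodule.smul_mem_iff _ hcoef).mp hmem
  set s : Set (Fin l) := {i | D.base i ∈ U} with hs
  have hγO : γ ∈ O := ⟨1, one_mem _, rfl⟩
  have hsne : s.Nonempty := by
    have hγU : γ ∈ U := Submodule.subset_span hγO
    have hex : ∃ i, ⟪D.base i, γ⟫ ≠ 0 := by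
      by_contra hall
      push_neg at hall
      exact (inner_self_pos_of_mem D hγ).ne' (base_ortho_zero D hγ hall)
    obtain ⟨i, hi⟩ := hex
    rcases dich (D.base i) (D.base_mem i) with h | h
    · exact ⟨i, h⟩
    · exact absurd (h γ hγO) hi
  have hsuniv : s = Set.univ := by
    apply D.irreducible s hsne
    intro i hi j hj
    rcases dich (D.base j) (D.base_mem j) with h | h
    · exact absurd h hj
    · rw [real_inner_comm]
      exact ortho_span h (D.base i) hi
  -- θ is orthogonal to U but every base vector is in U
  have hθO : ∀ u ∈ O, ⟪θ, u⟫ = 0 := by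
    rintro u ⟨w, hw, rfl⟩
    rw [real_inner_comm]
    exact hcon w hw
  have hθU : ∀ v ∈ U, ⟪θ, v⟫ = 0 := ortho_span hθO
  have hbase : ∀ i, ⟪θ, D.base i⟫ = 0 := by
    intro i
    apply hθU
    have : i ∈ s := hsuniv ▸ Set.mem_univ i
    exact this
  exact hθθ (base_ortho_zero D hθ fun i => (real_inner_comm θ (D.base i)).trans (hbase i))

lemma two_div_int (D : RootSystemData l) {γ : EucV l} (hγ : γ ∈ D.Δ) :
    ∃ n : ℤ, 2 = (n : ℝ) * ⟪γ, γ⟫ := by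
  obtain ⟨θ, hθ, hθ2⟩ := D.exists_long
  obtain ⟨w, hw, hne⟩ := exists_nonortho D hγ hθ (by rw [hθ2]; norm_num)
  have hwγ : w γ ∈ D.Δ := weyl_root D hw hγ
  obtain ⟨n, hn⟩ := pair_long D hwγ hθ hθ2 hne
  rw [LinearIsometryEquiv.inner_map_map] at hn
  exact ⟨n, hn⟩

lemma coroot_pair_int (D : RootSystemData l) {γ δ : EucV l} (hγ : γ ∈ D.Δ) (hδ : δ ∈ D.Δ) :
    ∃ n : ℤ, ⟪coroot γ, coroot δ⟫ = (n : ℝ) := by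
  obtain ⟨n₂, hn₂⟩ := two_div_int D hδ
  obtain ⟨p, hp⟩ := pairing_int D hγ hδ
  have hδ0 : ⟪δ, δ⟫ ≠ 0 := (inner_self_pos_of_mem D hδ).ne'
  refine ⟨n₂ * p, ?_⟩
  have key : ⟪coroot γ, coroot δ⟫ = (2 / ⟪δ, δ⟫) * ⟪δ, coroot γ⟫ := by
    nth_rewrite 2 [coroot]
    rw [real_inner_smul_right, real_inner_comm δ (coroot γ)]
  have h2 : 2 / ⟪δ, δ⟫ = (n₂ : ℝ) := by rw [div_eq_iff hδ0]; linarith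
  rw [key, h2, hp]
  push_cast
  ring

lemma coroot_self_even (D : RootSystemData l) {γ : EucV l} (hγ : γ ∈ D.Δ) :
    ∃ d : ℤ, ⟪coroot γ, coroot γ⟫ = 2 * (d : ℝ) := by
  obtain ⟨n₂, h⟩ := two_div_int D hγ
  refine ⟨n₂, ?_⟩
  have hg : ⟪γ, γ⟫ ≠ 0 := (inner_self_pos_of_mem D hγ).ne'
  rw [coroot, real_inner_smul_left, real_inner_smul_right]
  have h2 : 2 / ⟪γ, γ⟫ = (n₂ : ℝ) := by rw [div_eq_iff hg]; linarith
  rw [h2]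
  linear_combination (-(n₂ : ℝ)) * h

lemma lattice_pair_int (D : RootSystemData l) {x y : EucV l}
    (hx : x ∈ D.corootLattice) (hy : y ∈ D.corootLattice) :
    ∃ n : ℤ, ⟪x, y⟫ = (n : ℝ) := by
  induction hx, hy using Submodule.span_induction₂ with
  | mem_mem u v hu hv =>
      obtain ⟨γ, hγ, rfl⟩ := hu
      obtain ⟨δ, hδ, rfl⟩ := hv
      exact coroot_pair_int D hγ hδ
  | zero_left v hv => exact ⟨0, by simp⟩
  | zero_right u hu => exact ⟨0, by simp⟩
  | add_left u v y hu hv hy pu pv =>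
      obtain ⟨n, hn⟩ := pu
      obtain ⟨m, hm⟩ := pv
      exact ⟨n + m, by rw [inner_add_left, hn, hm]; push_cast; ring⟩
  | add_right u v y hu hv hy pu pv =>
      obtain ⟨n, hn⟩ := pu
      obtain ⟨m, hm⟩ := pv
      exact ⟨n + m, by rw [inner_add_right, hn, hm]; push_cast; ring⟩
  | smul_left a u v hu hv pu =>
      obtain ⟨n, hn⟩ := pu
      exact ⟨a * n, by
        rw [← Int.cast_smul_eq_zsmul ℝ a u, real_inner_smul_left, hn]; push_cast; ring⟩
  | smul_right a u v hu hv pu =>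
      obtain ⟨n, hn⟩ := pu
      exact ⟨a * n, by
        rw [← Int.cast_smul_eq_zsmul ℝ a v, real_inner_smul_right, hn]; push_cast; ring⟩

lemma lattice_self_even (D : RootSystemData l) {x : EucV l} (hx : x ∈ D.corootLattice) :
    ∃ d : ℤ, ⟪x, x⟫ = 2 * (d : ℝ) := by
  induction hx using Submodule.span_induction with
  | mem u hu =>
      obtain ⟨γ, hγ, rfl⟩ := hu
      exact coroot_self_even D hγ
  | zero => exact ⟨0, by simp⟩
  | add u v hu hv pu pv =>
      obtain ⟨d, hd⟩ := pu
      obtain ⟨e, he⟩ := pv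
      obtain ⟨n, hn⟩ := lattice_pair_int D hu hv
      refine ⟨d + e + n, ?_⟩
      rw [real_inner_add_add_self, hd, he, hn]
      push_cast
      ring
  | smul a u hu pu =>
      obtain ⟨d, hd⟩ := pu
      refine ⟨a * a * d, ?_⟩
      rw [← Int.cast_smul_eq_zsmul ℝ a u, real_inner_smul_left, real_inner_smul_right, hd]
      push_cast
      ring

lemma mem_of_mem_Δplus (D : RootSystemData l) {β : EucV l} (hβ : β ∈ D.Δplus) : β ∈ D.Δ :=
  (Finset.mem_filter.mp hβ).1

lemma dichot (D : RootSystemData l) {β : EucV l} (hβ : β ∈ D.Δ) :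
    β ∈ D.Δplus ∨ -β ∈ D.Δplus := by
  rcases D.base_pos_or_neg β hβ with ⟨c, hc⟩ | ⟨c, hc⟩
  · exact Or.inl (Finset.mem_filter.mpr ⟨hβ, c, hc⟩)
  · refine Or.inr (Finset.mem_filter.mpr ⟨D.neg_mem β hβ, c, ?_⟩)
    rw [hc, neg_neg]

lemma not_both (D : RootSystemData l) {β : EucV l} (hβ : β ∈ D.Δplus) : -β ∉ D.Δplus := by
  intro h2
  obtain ⟨c, hc⟩ := (Finset.mem_filter.mp hβ).2
  obtain ⟨c', hc'⟩ := (Finset.mem_filter.mp h2).2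
  have hsum : ∑ i, ((c i : ℝ) + (c' i : ℝ)) • D.base i = 0 := by
    simp_rw [add_smul]
    rw [Finset.sum_add_distrib, ← hc, ← hc']
    abel
  have hall := Fintype.linearIndependent_iff.mp D.base_indep
    (fun i => (c i : ℝ) + (c' i : ℝ)) hsum
  have hβ0 : β = 0 := by
    rw [hc]
    apply Finset.sum_eq_zero
    intro i _
    have h1 : (c i : ℝ) + (c' i : ℝ) = 0 := hall i
    have h2 : (0:ℝ) ≤ (c i : ℝ) := Nat.cast_nonneg _
    have h3 : (0:ℝ) ≤ (c' i : ℝ) := Nat.cast_nonneg _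
    have : (c i : ℝ) = 0 := by linarith
    rw [this, zero_smul]
  exact D.zero_not_mem (hβ0 ▸ (Finset.mem_filter.mp hβ).1)

lemma rho_coroot_int (D : RootSystemData l) {α : EucV l} (hα : α ∈ D.Δ) :
    ∃ n : ℤ, ⟪D.rho, coroot α⟫ = (n : ℝ) := by
  classical
  have hg0 : ⟪α, α⟫ ≠ 0 := (inner_self_pos_of_mem D hα).ne'
  have hαne : α ≠ 0 := fun h => D.zero_not_mem (h ▸ hα)
  -- choice of integer pairing function
  have hn : ∀ β : EucV l, ∃ n : ℤ, β ∈ D.Δ → ⟪β, coroot α⟫ = n := by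
    intro β
    by_cases h : β ∈ D.Δ
    · obtain ⟨n, hn⟩ := pairing_int D hα h
      exact ⟨n, fun _ => hn⟩
    · exact ⟨0, fun h' => absurd h' h⟩
  choose nf hnf using hn
  -- reflection negates the pairing with the coroot
  have hrefl : ∀ β : EucV l, ⟪rootReflection α β, coroot α⟫ = -⟪β, coroot α⟫ := by
    intro β
    have h1 : rootReflection α (coroot α) = -(coroot α) := by
      rw [coroot, LinearIsometryEquiv.map_smul, rr_self, smul_neg]
    have h2 : ⟪rootReflection α β, coroot α⟫
        = ⟪rootReflection α β, rootReflection α (rootReflection α (coroot α))⟫ := by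
      rw [rr_rr]
    rw [h2, LinearIsometryEquiv.inner_map_map, h1, inner_neg_right]
  have hnf_r : ∀ β ∈ D.Δ, nf (rootReflection α β) = -(nf β) := by
    intro β hβ
    have hrβ : rootReflection α β ∈ D.Δ := D.reflect_mem α hα β hβ
    have : ((nf (rootReflection α β)) : ℝ) = -(nf β : ℝ) := by
      rw [← hnf _ hrβ, hrefl, hnf _ hβ]
    exact_mod_cast this
  have hnf_nr : ∀ β ∈ D.Δ, nf (-(rootReflection α β)) = nf β := by
    intro β hβ
    have hrβ : -(rootReflection α β) ∈ D.Δ := D.neg_mem _ (D.reflect_mem α hα β hβ)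
    have : ((nf (-(rootReflection α β))) : ℝ) = (nf β : ℝ) := by
      rw [← hnf _ hrβ, inner_neg_left, hrefl, neg_neg, hnf _ hβ]
    exact_mod_cast this
  -- the sum over the positive roots
  set N : ℤ := ∑ β ∈ D.Δplus, nf β with hNdef
  have heven : (2:ℤ) ∣ N := by
    have hzmod : ((N : ZMod 2)) = 0 := by
      rw [hNdef]
      push_cast
      refine Finset.sum_involution
        (fun β _ => if rootReflection α β ∈ D.Δplus then rootReflection α β
          else -(rootReflection α β)) ?_ ?_ ?_ ?_
      · -- sums to zero
        intro a ha
        have haΔ : a ∈ D.Δ := mem_of_mem_Δplus D ha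
        by_cases h : rootReflection α a ∈ D.Δplus
        · rw [if_pos h, hnf_r a haΔ]
          push_cast
          ring
        · rw [if_neg h, hnf_nr a haΔ, ← two_mul, show (2 : ZMod 2) = 0 from rfl, zero_mul]
      · -- fixed points have value 0 (mod 2)
        intro a ha hfa heq
        apply hfa
        have haΔ : a ∈ D.Δ := mem_of_mem_Δplus D ha
        by_cases h : rootReflection α a ∈ D.Δplus
        · rw [if_pos h] at heq
          -- reflection fixes a, so a ⟂ α, so the pairing vanishes
          have hmem : a ∈ ((ℝ ∙ α)ᗮ : Submodule ℝ (EucV l)) := by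
            rw [← Submodule.reflection_eq_self_iff]
            exact heq
          have hiz : ⟪a, α⟫ = 0 :=
            Submodule.mem_orthogonal_singleton_iff_inner_left.mp hmem
          have : ((nf a : ℝ)) = 0 := by
            rw [← hnf _ haΔ, coroot, real_inner_smul_right, hiz, mul_zero]
          have h0 : nf a = 0 := by exact_mod_cast this
          rw [h0]
          simp
        · rw [if_neg h] at heq
          -- a = ±α, the pairing is ±2
          have heq2 : rootReflection α a = -a := neg_eq_iff_eq_neg.mp heq
          have h0 := rr_apply α a
          rw [heq2] at h0
          have h1 : (2 * ⟪α, a⟫ / ⟪α, α⟫) • α = (2:ℝ) • a := by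
            linear_combination (norm := module) h0
          have hveq : (2 * ⟪α, a⟫ / ⟪α, α⟫ / 2) • α = a := by
            rw [div_eq_mul_inv (2 * ⟪α, a⟫ / ⟪α, α⟫) (2:ℝ), mul_comm, mul_smul, h1,
              smul_smul]
            norm_num
          have hαav : ⟪α, coroot α⟫ = 2 := by
            rw [coroot, real_inner_smul_right]
            exact div_mul_cancel₀ (2:ℝ) hg0
          have ha' : a = α ∨ a = -α := by
            rcases D.reduced α hα _ (by rw [hveq]; exact haΔ) with h1' | h1'
            · left; rw [← hveq, h1', one_smul]
            · right; rw [← hveq, h1', neg_one_smul]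
          rcases ha' with rfl | rfl
          · have : ((nf a : ℝ)) = 2 := by rw [← hnf _ haΔ]; exact hαav
            have h0' : nf a = 2 := by exact_mod_cast this
            rw [h0']
            decide
          · have : ((nf (-α) : ℝ)) = -2 := by
              rw [← hnf _ haΔ, inner_neg_left, hαav]
            have h0' : nf (-α) = -2 := by exact_mod_cast this
            rw [h0']
            decide
      · -- maps into Δ₊
        intro a ha
        have haΔ : a ∈ D.Δ := mem_of_mem_Δplus D ha
        by_cases h : rootReflection α a ∈ D.Δplus
        · rw [if_pos h]; exact h
        · rw [if_neg h]
          rcases dichot D (D.reflect_mem α hα a haΔ) with h' | h'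
          · exact absurd h' h
          · exact h'
      · -- involution
        intro a ha
        have haΔ : a ∈ D.Δ := mem_of_mem_Δplus D ha
        by_cases h : rootReflection α a ∈ D.Δplus
        · rw [if_pos h]
          have hc : rootReflection α (rootReflection α a) = a := rr_rr α a
          rw [hc, if_pos ha]
        · rw [if_neg h]
          have hc : rootReflection α (-(rootReflection α a)) = -a := by
            rw [map_neg, rr_rr]
          rw [hc, if_neg (not_both D ha), neg_neg]
    exact (ZMod.intCast_zmod_eq_zero_iff_dvd N 2).mp hzmod
  obtain ⟨k, hk⟩ := heven
  refine ⟨k, ?_⟩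
  rw [RootSystemData.rho, real_inner_smul_left, sum_inner]
  have hsum : (∑ β ∈ D.Δplus, ⟪β, coroot α⟫) = (N : ℝ) := by
    rw [hNdef]
    push_cast
    exact Finset.sum_congr rfl fun β hβ => hnf β (mem_of_mem_Δplus D hβ)
  rw [hsum, hk]
  push_cast
  ring

lemma rho_lattice_int (D : RootSystemData l) {x : EucV l} (hx : x ∈ D.corootLattice) :
    ∃ n : ℤ, ⟪D.rho, x⟫ = (n : ℝ) := by
  induction hx using Submodule.span_induction with
  | mem u hu =>
      obtain ⟨γ, hγ, rfl⟩ := hu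
      exact rho_coroot_int D hγ
  | zero => exact ⟨0, by simp⟩
  | add u v hu hv pu pv =>
      obtain ⟨n, hn⟩ := pu
      obtain ⟨m, hm⟩ := pv
      exact ⟨n + m, by rw [inner_add_right, hn, hm]; push_cast; ring⟩
  | smul a u hu pu =>
      obtain ⟨n, hn⟩ := pu
      exact ⟨a * n, by
        rw [← Int.cast_smul_eq_zsmul ℝ a u, real_inner_smul_right, hn]; push_cast; ring⟩

lemma wrho_int (D : RootSystemData l) {w : EucV l ≃ₗᵢ[ℝ] EucV l} (hw : w ∈ D.weyl)
    {x : EucV l} (hx : x ∈ D.corootLattice) :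
    ∃ n : ℤ, ⟪w D.rho, x⟫ = (n : ℝ) := by
  have hwx : w (w⁻¹ x) = x := by
    rw [LinearIsometryEquiv.coe_inv]
    exact w.apply_symm_apply x
  have h : ⟪w D.rho, x⟫ = ⟪D.rho, w⁻¹ x⟫ := by
    conv_lhs => rw [← hwx]
    rw [LinearIsometryEquiv.inner_map_map]
  rw [h]
  exact rho_lattice_int D (weyl_lattice D (inv_mem hw) hx)

lemma norm_add_smul_sq (u v : EucV l) (t : ℝ) :
    ‖u + t • v‖ ^ 2 = ‖u‖ ^ 2 + 2 * t * ⟪u, v⟫ + t ^ 2 * ⟪v, v⟫ := by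
  rw [norm_add_sq_real, real_inner_smul_right, norm_smul, mul_pow, Real.norm_eq_abs,
    _root_.sq_abs]
  simp only [← real_inner_self_eq_norm_sq]
  ring

lemma inner_add_smul (u z v : EucV l) (t s : ℝ) :
    ⟪u + t • v, z + s • v⟫ = ⟪u, z⟫ + s * ⟪u, v⟫ + t * ⟪v, z⟫ + t * s * ⟪v, v⟫ := by
  simp only [inner_add_left, inner_add_right, real_inner_smul_left, real_inner_smul_right]
  ring

lemma inner_add_smul_left (u z v : EucV l) (t : ℝ) :
    ⟪u + t • v, z⟫ = ⟪u, z⟫ + t * ⟪v, z⟫ := by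
  simp only [inner_add_left, real_inner_smul_left]

lemma inner_add_smul_right (u z v : EucV l) (s : ℝ) :
    ⟪u, z + s • v⟫ = ⟪u, z⟫ + s * ⟪u, v⟫ := by
  simp only [inner_add_right, real_inner_smul_right]

lemma exp_helper (κ : ℕ) (α : ℤ) (hκ : κ ≠ 0) (hα : α ≠ 0) (R R' : ℝ) (m : ℤ)
    (h : R' = R + (κ : ℝ) * (α : ℝ) * (2 * m)) :
    Complex.exp (-(Real.pi : ℂ) * Complex.I / ((κ : ℂ) * (α : ℂ)) * ((R' : ℝ) : ℂ)) =
      Complex.exp (-(Real.pi : ℂ) * Complex.I / ((κ : ℂ) * (α : ℂ)) * ((R : ℝ) : ℂ)) := by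
  have hκc : (κ : ℂ) ≠ 0 := Nat.cast_ne_zero.mpr hκ
  have hαc : (α : ℂ) ≠ 0 := Int.cast_ne_zero.mpr hα
  have hR : ((R' : ℝ) : ℂ) = ((R : ℝ) : ℂ) + (κ : ℂ) * (α : ℂ) * (2 * (m : ℂ)) := by
    rw [h]
    push_cast
    ring
  rw [hR, mul_add, Complex.exp_add]
  have hkey : -(Real.pi : ℂ) * Complex.I / ((κ : ℂ) * (α : ℂ)) *
      ((κ : ℂ) * (α : ℂ) * (2 * (m : ℂ))) = ((-m : ℤ) : ℂ) * (2 * (Real.pi : ℂ) * Complex.I) := by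
    field_simp
    push_cast
    ring
  rw [hkey, Complex.exp_int_mul_two_pi_mul_I, mul_one]

end HT

/-- Lemma `lem:Fsymmetries` of Hansen–Takata.
For coprime `α > 0`, `β` with `ββ* ≡ 1 (mod α)`, the map
`F(λ,ν,w) = det(w)·exp(−(πi/(κα))[β|λ|² + 2⟨λ,κν+w(ρ)⟩ + β*|κν+w(ρ)|²])`
on `X × Y∨ × W` is invariant under the transformations
`(λ,ν,w) ↦ (λ ± κx, ν ∓ βx, w)`, `(λ,ν,w) ↦ (λ, ν ± αx, w)` and
`(λ,ν,w) ↦ (λ ± καx, ν, w)` for every `x ∈ Y∨`. -/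
theorem statement13 {l : ℕ} (D : RootSystemData l) (κ : ℕ) (hκpos : 0 < κ)
    (α β βs : ℤ) (hα : 0 < α) (hαβ : IsCoprime α β) (hβs : α ∣ β * βs - 1)
    (F : EucV l → EucV l → (EucV l ≃ₗᵢ[ℝ] EucV l) → ℂ)
    (hF : ∀ (lam ν : EucV l) (w : EucV l ≃ₗᵢ[ℝ] EucV l),
      F lam ν w = ((wdet w : ℝ) : ℂ) *
        Complex.exp (-(Real.pi : ℂ) * Complex.I / ((κ : ℂ) * (α : ℂ)) *
          (((β : ℝ) * ‖lam‖ ^ 2 +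
              2 * (inner ℝ lam ((κ : ℝ) • ν + w D.rho) : ℝ) +
              (βs : ℝ) * ‖(κ : ℝ) • ν + w D.rho‖ ^ 2 : ℝ) : ℂ))) :
    ∀ lam ∈ D.weightLattice, ∀ ν ∈ D.corootLattice, ∀ w ∈ D.weyl,
      ∀ x ∈ D.corootLattice,
        (F (lam + (κ : ℝ) • x) (ν - (β : ℝ) • x) w = F lam ν w ∧
            F (lam - (κ : ℝ) • x) (ν + (β : ℝ) • x) w = F lam ν w) ∧
          (F lam (ν + (α : ℝ) • x) w = F lam ν w ∧
            F lam (ν - (α : ℝ) • x) w = F lam ν w) ∧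
          (F (lam + ((κ : ℝ) * (α : ℝ)) • x) ν w = F lam ν w ∧
            F (lam - ((κ : ℝ) * (α : ℝ)) • x) ν w = F lam ν w) := by
  intro lam hlam ν hν w hw x hx
  have hκ0 : κ ≠ 0 := hκpos.ne'
  have hα0 : α ≠ 0 := hα.ne'
  obtain ⟨k, hk⟩ := hβs
  have hkr : (β : ℝ) * (βs : ℝ) - 1 = (α : ℝ) * (k : ℝ) := by exact_mod_cast hk
  have main : ∀ (lam' ν' : EucV l) (m : ℤ),
      ((β : ℝ) * ‖lam'‖ ^ 2 + 2 * (inner ℝ lam' ((κ : ℝ) • ν' + w D.rho) : ℝ)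
          + (βs : ℝ) * ‖(κ : ℝ) • ν' + w D.rho‖ ^ 2)
        = ((β : ℝ) * ‖lam‖ ^ 2 + 2 * (inner ℝ lam ((κ : ℝ) • ν + w D.rho) : ℝ)
          + (βs : ℝ) * ‖(κ : ℝ) • ν + w D.rho‖ ^ 2) + (κ : ℝ) * (α : ℝ) * (2 * m) →
      F lam' ν' w = F lam ν w := by
    intro lam' ν' m h
    rw [hF, hF]
    congr 1
    exact HT.exp_helper κ α hκ0 hα0 _ _ m h
  have master : ∀ (y : EucV l) (a b c d : ℤ),
      (inner ℝ lam y : ℝ) = a → (inner ℝ ν y : ℝ) = b → (inner ℝ (w D.rho) y : ℝ) = c →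
      (inner ℝ y y : ℝ) = 2 * d →
      F (lam + (κ : ℝ) • y) (ν - (β : ℝ) • y) w = F lam ν w ∧
      F lam (ν + (α : ℝ) • y) w = F lam ν w ∧
      F (lam + ((κ : ℝ) * (α : ℝ)) • y) ν w = F lam ν w := by
    intro y a b c d hay hby hcy hdy
    have hby' : (inner ℝ y ν : ℝ) = b := (real_inner_comm ν y).trans hby
    have hcy' : (inner ℝ y (w D.rho) : ℝ) = c := (real_inner_comm (w D.rho) y).trans hcy
    have hMy : (inner ℝ ((κ : ℝ) • ν + w D.rho) y : ℝ) = (κ : ℝ) * b + c := by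
      rw [inner_add_left, real_inner_smul_left, hby, hcy]
    have hyM : (inner ℝ y ((κ : ℝ) • ν + w D.rho) : ℝ) = (κ : ℝ) * b + c := by
      rw [inner_add_right, real_inner_smul_right, hby', hcy']
    refine ⟨?_, ?_, ?_⟩
    · apply main _ _ (k * ((κ : ℤ) * d * β - ((κ : ℤ) * b + c)))
      have hva : (κ : ℝ) • (ν - (β : ℝ) • y) + w D.rho
          = ((κ : ℝ) • ν + w D.rho) + (-((κ : ℝ) * (β : ℝ))) • y := by module
      rw [hva, HT.norm_add_smul_sq, HT.inner_add_smul, HT.norm_add_smul_sq,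
        hay, hMy, hyM, hdy]
      push_cast
      linear_combination
        (2 * (κ : ℝ) ^ 2 * (d : ℝ) * (β : ℝ)
          - 2 * (κ : ℝ) * ((κ : ℝ) * (b : ℝ) + (c : ℝ))) * hkr
    · apply main _ _ (a + βs * ((κ : ℤ) * b + c) + (κ : ℤ) * α * βs * d)
      have hvb : (κ : ℝ) • (ν + (α : ℝ) • y) + w D.rho
          = ((κ : ℝ) • ν + w D.rho) + ((κ : ℝ) * (α : ℝ)) • y := by module
      rw [hvb, HT.inner_add_smul_right, HT.norm_add_smul_sq, hay, hMy, hdy]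
      push_cast
      ring
    · apply main _ _ (β * a + β * (κ : ℤ) * α * d + (κ : ℤ) * b + c)
      rw [HT.norm_add_smul_sq, HT.inner_add_smul_left, hay, hyM, hdy]
      push_cast
      ring
  obtain ⟨a, ha⟩ := hlam x hx
  obtain ⟨b, hb⟩ := HT.lattice_pair_int D hν hx
  obtain ⟨c, hc⟩ := HT.wrho_int D hw hx
  obtain ⟨d, hd⟩ := HT.lattice_self_even D hx
  obtain ⟨Hp1, Hp2, Hp3⟩ := master x a b c d ha hb hc hd
  obtain ⟨Hn1, Hn2, Hn3⟩ := master (-x) (-a) (-b) (-c) d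
    (by rw [inner_neg_right, ha]; push_cast; ring)
    (by rw [inner_neg_right, hb]; push_cast; ring)
    (by rw [inner_neg_right, hc]; push_cast; ring)
    (by rw [inner_neg_neg]; exact hd)
  have e1 : lam + (κ : ℝ) • (-x) = lam - (κ : ℝ) • x := by module
  have e2 : ν - (β : ℝ) • (-x) = ν + (β : ℝ) • x := by module
  have e3 : ν + (α : ℝ) • (-x) = ν - (α : ℝ) • x := by module
  have e4 : lam + ((κ : ℝ) * (α : ℝ)) • (-x) = lam - ((κ : ℝ) * (α : ℝ)) • x := by module
  rw [e1, e2] at Hn1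
  rw [e3] at Hn2
  rw [e4] at Hn3
  exact ⟨⟨Hp1, Hn1⟩, ⟨Hp2, Hn2⟩, ⟨Hp3, Hn3⟩⟩
end
end
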